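/- arXiv:2111.02734 — 4 statements merged into one kernel-verified Lean document; each statement's English description precedes it below -/
import Mathlib

section
/- Let t ≥ 2 be an integer and let G be a finite connected simple graph with at least one edge, minimum degree δ(G) and spectral radius ρ(G). Then cp^{(t)}(G) ≥ ρ(G) − t + 1 + ⌈δ(G)/(t−1)⌉. -/
open Finset SimpleGraph Polynomial

variable {V : Type*}

/-- A clique partition of `G`: a set of cliques of `G` such that every edge of `G`
lies in exactly one of them. -/
def IsCliquePartition [DecidableEq V] (G : SimpleGraph V) (P : Finset (Finset V)) : Prop :=
  (∀ s ∈ P, G.IsClique (s : Set V)) ∧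
    ∀ u v : V, G.Adj u v → ∃! s, s ∈ P ∧ u ∈ s ∧ v ∈ s

/-- The spectral radius of a finite graph: the largest eigenvalue of its adjacency matrix. -/
noncomputable def specRad [Fintype V] [DecidableEq V] (G : SimpleGraph V)
    [DecidableRel G.Adj] : ℝ :=
  sSup {μ : ℝ | Module.End.HasEigenvalue (Matrix.toLin' (G.adjMatrix ℝ)) μ}

/-- `cpT G t` : the minimum number of cliques in a clique partition of `G` in which
every clique has at most `t` vertices. -/
noncomputable def cpT [DecidableEq V] (G : SimpleGraph V) (t : ℕ) : ℕ :=
  sInf {m | ∃ P : Finset (Finset V),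
    IsCliquePartition G P ∧ (∀ s ∈ P, s.card ≤ t) ∧ P.card = m}

/-- `cp G` : the clique partition number of `G`. -/
noncomputable def cp [DecidableEq V] (G : SimpleGraph V) : ℕ :=
  sInf {m | ∃ P : Finset (Finset V), IsCliquePartition G P ∧ P.card = m}

section Aux

set_option linter.unusedSectionVars false

variable [Fintype V] [DecidableEq V] {G : SimpleGraph V} [DecidableRel G.Adj]
  {P : Finset (Finset V)} {t : ℕ}

/-- The number of cliques of a clique partition containing two adjacent vertices is one. -/
lemma card_pair_filter_of_adj (hP : IsCliquePartition G P) {u v : V} (h : G.Adj u v) :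
    (P.filter fun s => u ∈ s ∧ v ∈ s).card = 1 := by
  obtain ⟨s₀, hs₀, huniq⟩ := hP.2 u v h
  rw [Finset.card_eq_one]
  refine ⟨s₀, Finset.eq_singleton_iff_unique_mem.2 ⟨?_, ?_⟩⟩
  · simp only [Finset.mem_filter]; exact ⟨hs₀.1, hs₀.2⟩
  · intro s hs
    simp only [Finset.mem_filter] at hs
    exact huniq s ⟨hs.1, hs.2⟩

lemma card_pair_filter_of_not_adj (hP : IsCliquePartition G P) {u v : V} (hne : u ≠ v)
    (h : ¬ G.Adj u v) : (P.filter fun s => u ∈ s ∧ v ∈ s).card = 0 := by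
  rw [Finset.card_eq_zero, Finset.filter_eq_empty_iff]
  rintro s hs ⟨hu, hv⟩
  exact h (hP.1 s hs hu hv hne)

/-- Two distinct cliques of a clique partition meet in at most one vertex. -/
lemma inter_card_le_one (hP : IsCliquePartition G P) {s s' : Finset V}
    (hs : s ∈ P) (hs' : s' ∈ P) (hne : s ≠ s') : (s ∩ s').card ≤ 1 := by
  by_contra hlt
  push_neg at hlt
  obtain ⟨u, hu, v, hv, huv⟩ := Finset.one_lt_card.1 hlt
  simp only [Finset.mem_inter] at hu hv
  have hadj : G.Adj u v := hP.1 s hs hu.1 hv.1 huv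
  obtain ⟨s₀, _, huniq⟩ := hP.2 u v hadj
  exact hne ((huniq s ⟨hs, hu.1, hv.1⟩).trans (huniq s' ⟨hs', hu.2, hv.2⟩).symm)

/-- Degree bound: `deg v ≤ d'(v) * (t-1)`. -/
lemma degree_le_clique_count (hP : IsCliquePartition G P) (hc : ∀ s ∈ P, s.card ≤ t)
    (v : V) : G.degree v ≤ (P.filter fun s => v ∈ s).card * (t - 1) := by
  have h1 : G.degree v = ∑ w ∈ G.neighborFinset v,
      (P.filter fun s => v ∈ s ∧ w ∈ s).card := by
    rw [← SimpleGraph.card_neighborFinset_eq_degree]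
    rw [Finset.card_eq_sum_ones]
    refine Finset.sum_congr rfl fun w hw => ?_
    rw [SimpleGraph.mem_neighborFinset] at hw
    exact (card_pair_filter_of_adj hP hw).symm
  rw [h1]
  have h2 : ∀ w, (P.filter fun s => v ∈ s ∧ w ∈ s).card
      = ∑ s ∈ P, if v ∈ s ∧ w ∈ s then 1 else 0 := fun w => Finset.card_filter _ _
  simp_rw [h2]
  rw [Finset.sum_comm]
  have h3 : ∀ s ∈ P, (∑ w ∈ G.neighborFinset v, if v ∈ s ∧ w ∈ s then 1 else 0)
      ≤ if v ∈ s then t - 1 else 0 := by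
    intro s hs
    by_cases hv : v ∈ s
    · simp only [hv, true_and, if_true]
      rw [Finset.sum_boole]
      have hsub : (G.neighborFinset v).filter (fun w => w ∈ s) ⊆ s.erase v := by
        intro w hw
        simp only [Finset.mem_filter, SimpleGraph.mem_neighborFinset] at hw
        exact Finset.mem_erase.2 ⟨hw.1.ne', hw.2⟩
      calc ((G.neighborFinset v).filter (fun w => w ∈ s)).card
          ≤ (s.erase v).card := Finset.card_le_card hsub
        _ = s.card - 1 := Finset.card_erase_of_mem hv
        _ ≤ t - 1 := Nat.sub_le_sub_right (hc s hs) 1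
    · simp [hv]
  calc (∑ s ∈ P, ∑ w ∈ G.neighborFinset v, if v ∈ s ∧ w ∈ s then 1 else 0)
      ≤ ∑ s ∈ P, if v ∈ s then t - 1 else 0 := Finset.sum_le_sum h3
    _ = ∑ s ∈ P.filter (fun s => v ∈ s), (t - 1) := (Finset.sum_filter _ _).symm
    _ = (P.filter fun s => v ∈ s).card * (t - 1) := by
        rw [Finset.sum_const, smul_eq_mul]

/-- The ceiling `⌈δ/(t-1)⌉` is at most the number of cliques containing any vertex. -/
lemma ceil_le_clique_count (hP : IsCliquePartition G P) (hc : ∀ s ∈ P, s.card ≤ t)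
    (ht : 2 ≤ t) (v : V) :
    ((⌈(G.minDegree : ℝ) / ((t : ℝ) - 1)⌉ : ℤ) : ℝ)
      ≤ ((P.filter fun s => v ∈ s).card : ℝ) := by
  have ht1 : (0 : ℝ) < (t : ℝ) - 1 := by
    have : (2 : ℝ) ≤ (t : ℝ) := by exact_mod_cast ht
    linarith
  have hd : G.minDegree ≤ (P.filter fun s => v ∈ s).card * (t - 1) :=
    le_trans (G.minDegree_le_degree v) (degree_le_clique_count hP hc v)
  have hcast : ((G.minDegree : ℝ)) ≤ ((P.filter fun s => v ∈ s).card : ℝ) * ((t : ℝ) - 1) := by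
    have h := (Nat.cast_le (α := ℝ)).2 hd
    rwa [Nat.cast_mul, Nat.cast_sub (le_trans (by norm_num) ht), Nat.cast_one] at h
  have h : (⌈(G.minDegree : ℝ) / ((t : ℝ) - 1)⌉ : ℤ)
      ≤ (((P.filter fun s => v ∈ s).card : ℕ) : ℤ) := by
    rw [Int.ceil_le]
    push_cast
    rw [div_le_iff₀ ht1]
    exact hcast
  exact_mod_cast h

/-- Counting vertices in the intersection of two finsets. -/
lemma sum_ind_eq_card_inter (s s' : Finset V) :
    (∑ v : V, (if v ∈ s then (1:ℝ) else 0) * (if v ∈ s' then 1 else 0))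
      = ((s ∩ s').card : ℝ) := by
  rw [show s ∩ s' = Finset.univ.filter (fun v => v ∈ s ∧ v ∈ s') by ext v; simp]
  rw [Finset.card_filter]
  push_cast
  exact Finset.sum_congr rfl fun v _ => by
    by_cases h1 : v ∈ s <;> by_cases h2 : v ∈ s' <;> simp [h1, h2]

/-- Main spectral estimate: every eigenvalue `μ` of the adjacency matrix satisfies
`μ ≤ |P| + t - 1 - ⌈δ/(t-1)⌉` for any clique partition `P` with cliques of size `≤ t`. -/
lemma eigenvalue_le (hP : IsCliquePartition G P) (hc : ∀ s ∈ P, s.card ≤ t)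
    (ht : 2 ≤ t) {μ : ℝ}
    (hμ : Module.End.HasEigenvalue (Matrix.toLin' (G.adjMatrix ℝ)) μ) :
    μ ≤ (P.card : ℝ) + (t : ℝ) - 1
        - ((⌈(G.minDegree : ℝ) / ((t : ℝ) - 1)⌉ : ℤ) : ℝ) := by
  classical
  obtain ⟨x, hx, hx0⟩ := hμ.exists_hasEigenvector
  rw [Module.End.mem_eigenspace_iff, Matrix.toLin'_apply] at hx
  set m : ℝ := ((⌈(G.minDegree : ℝ) / ((t : ℝ) - 1)⌉ : ℤ) : ℝ) with hm
  set k : ℝ := (P.card : ℝ) with hkdef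
  set y : Finset V → ℝ := fun s => ∑ v ∈ s, x v with hy
  set X : ℝ := ∑ v : V, x v ^ 2 with hX
  set S : ℝ := ∑ s ∈ P, y s ^ 2 with hS
  set D : ℝ := ∑ v : V, ((P.filter fun s => v ∈ s).card : ℝ) * x v ^ 2 with hD
  set z : V → ℝ := fun v => ∑ s ∈ P, if v ∈ s then y s else 0 with hz
  set Z : ℝ := ∑ v : V, z v ^ 2 with hZ
  have ht2 : (2 : ℝ) ≤ (t : ℝ) := by exact_mod_cast ht
  have hXpos : 0 < X := by
    obtain ⟨v, hv⟩ := Function.ne_iff.1 hx0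
    exact Finset.sum_pos' (fun _ _ => sq_nonneg _)
      ⟨v, Finset.mem_univ v, lt_of_le_of_ne (sq_nonneg _) (Ne.symm (pow_ne_zero 2 hv))⟩
  have hSnonneg : 0 ≤ S := Finset.sum_nonneg fun _ _ => sq_nonneg _
  -- eigen equation pointwise
  have heig : ∀ v : V, ∑ w : V, (G.adjMatrix ℝ) v w * x w = μ * x v := by
    intro v
    have := congrFun hx v
    simpa [Matrix.mulVec, dotProduct] using this
  -- indicator form of y
  have hyind : ∀ s : Finset V, y s = ∑ u : V, (if u ∈ s then (1:ℝ) else 0) * x u := by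
    intro s
    simp only [hy]
    rw [← Finset.univ_inter s, ← Finset.sum_ite_mem Finset.univ s x]
    exact Finset.sum_congr rfl fun u _ => by by_cases h : u ∈ s <;> simp [h]
  -- pair-count identity
  have hcount : ∀ u v : V,
      (∑ s ∈ P, (if u ∈ s then (1:ℝ) else 0) * (if v ∈ s then (1:ℝ) else 0))
      = (G.adjMatrix ℝ) u v + (if u = v then ((P.filter fun s => u ∈ s).card : ℝ) else 0) := by
    intro u v
    have hleft : (∑ s ∈ P, (if u ∈ s then (1:ℝ) else 0) * (if v ∈ s then (1:ℝ) else 0))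
        = ((P.filter fun s => u ∈ s ∧ v ∈ s).card : ℝ) := by
      rw [Finset.card_filter]
      push_cast
      refine Finset.sum_congr rfl fun s _ => ?_
      by_cases h1 : u ∈ s <;> by_cases h2 : v ∈ s <;> simp [h1, h2]
    rw [hleft]
    rcases eq_or_ne u v with rfl | hne
    · simp only [if_pos rfl, SimpleGraph.adjMatrix_apply, if_neg (G.irrefl), zero_add]
      congr 2
      exact Finset.filter_congr fun s _ => by simp
    · rw [if_neg hne, add_zero, SimpleGraph.adjMatrix_apply]
      by_cases hadj : G.Adj u v
      · rw [card_pair_filter_of_adj hP hadj, if_pos hadj]; norm_num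
      · rw [card_pair_filter_of_not_adj hP hne hadj, if_neg hadj]; norm_num
  -- The key identity: S = μ X + D
  have hSid : S = μ * X + D := by
    have expand : ∀ s : Finset V, y s ^ 2
        = ∑ u : V, ∑ v : V, ((if u ∈ s then (1:ℝ) else 0) * (if v ∈ s then (1:ℝ) else 0))
            * (x u * x v) := by
      intro s
      rw [sq, hyind s, Finset.sum_mul_sum]
      refine Finset.sum_congr rfl fun u _ => Finset.sum_congr rfl fun v _ => by ring
    calc S = ∑ u : V, ∑ v : V,
          (∑ s ∈ P, (if u ∈ s then (1:ℝ) else 0) * (if v ∈ s then (1:ℝ) else 0))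
          * (x u * x v) := by
          rw [hS]
          simp_rw [expand]
          rw [Finset.sum_comm]
          refine Finset.sum_congr rfl fun u _ => ?_
          rw [Finset.sum_comm]
          refine Finset.sum_congr rfl fun v _ => ?_
          rw [Finset.sum_mul]
      _ = ∑ u : V, ∑ v : V, ((G.adjMatrix ℝ) u v * (x u * x v)
            + (if u = v then ((P.filter fun s => u ∈ s).card : ℝ) else 0) * (x u * x v)) := by
          refine Finset.sum_congr rfl fun u _ => Finset.sum_congr rfl fun v _ => ?_
          rw [hcount u v, add_mul]
      _ = μ * X + D := by
          rw [Finset.sum_congr rfl (fun u _ => Finset.sum_add_distrib), Finset.sum_add_distrib]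
          congr 1
          · rw [hX, Finset.mul_sum]
            refine Finset.sum_congr rfl fun u _ => ?_
            have h : ∑ v : V, (G.adjMatrix ℝ) u v * (x u * x v)
                = x u * ∑ v : V, (G.adjMatrix ℝ) u v * x v := by
              rw [Finset.mul_sum]
              exact Finset.sum_congr rfl fun v _ => by ring
            rw [h, heig u]; ring
          · rw [hD]
            refine Finset.sum_congr rfl fun u _ => ?_
            have h : ∀ v : V, (if u = v then ((P.filter fun s => u ∈ s).card : ℝ) else 0)
                * (x u * x v)
                = if u = v then ((P.filter fun s => u ∈ s).card : ℝ) * (x u * x v) else 0 := by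
              intro v; by_cases h : u = v <;> simp [h]
            simp_rw [h]
            rw [Finset.sum_ite_eq Finset.univ u
              (fun v => ((P.filter fun s => u ∈ s).card : ℝ) * (x u * x v))]
            simp only [Finset.mem_univ, if_true]
            ring
  -- Cauchy–Schwarz step: S ^ 2 ≤ X * Z
  have hxz : ∑ v : V, x v * z v = S := by
    simp only [hz]
    calc ∑ v : V, x v * ∑ s ∈ P, (if v ∈ s then y s else 0)
        = ∑ v : V, ∑ s ∈ P, (if v ∈ s then x v * y s else 0) := by
          refine Finset.sum_congr rfl fun v _ => ?_
          rw [Finset.mul_sum]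
          exact Finset.sum_congr rfl fun s _ => by by_cases h : v ∈ s <;> simp [h]
      _ = ∑ s ∈ P, ∑ v : V, (if v ∈ s then x v * y s else 0) := Finset.sum_comm
      _ = S := by
          refine Finset.sum_congr rfl fun s _ => ?_
          rw [Finset.sum_ite_mem, Finset.univ_inter, ← Finset.sum_mul]
          rw [sq]
  have hCS : S ^ 2 ≤ X * Z := by
    rw [← hxz]
    exact sum_mul_sq_le_sq_mul_sq Finset.univ x z
  -- Gram bound: Z ≤ (k + t - 1) * S
  have hzind : ∀ v : V, z v = ∑ s ∈ P, (if v ∈ s then (1:ℝ) else 0) * y s := by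
    intro v
    simp only [hz]
    exact Finset.sum_congr rfl fun s _ => by by_cases h : v ∈ s <;> simp [h]
  have hZexp : Z = ∑ s ∈ P, ∑ s' ∈ P, ((s ∩ s').card : ℝ) * (y s * y s') := by
    have expand : ∀ v : V, z v ^ 2 = ∑ s ∈ P, ∑ s' ∈ P,
        (if v ∈ s then (1:ℝ) else 0) * (if v ∈ s' then 1 else 0) * (y s * y s') := by
      intro v
      rw [sq, hzind v, Finset.sum_mul_sum]
      refine Finset.sum_congr rfl fun s _ => Finset.sum_congr rfl fun s' _ => by ring
    rw [hZ]
    simp_rw [expand]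
    rw [Finset.sum_comm]
    refine Finset.sum_congr rfl fun s _ => ?_
    rw [Finset.sum_comm]
    refine Finset.sum_congr rfl fun s' _ => ?_
    rw [← Finset.sum_mul, sum_ind_eq_card_inter]
  have hrow : ∀ s ∈ P, (∑ s' ∈ P, ((s ∩ s').card : ℝ)) ≤ k + (t : ℝ) - 1 := by
    intro s hs
    rw [← Finset.add_sum_erase P (fun s' => ((s ∩ s').card : ℝ)) hs]
    have h1 : ((s ∩ s).card : ℝ) ≤ (t : ℝ) := by
      rw [Finset.inter_self]
      exact_mod_cast hc s hs
    have h2 : (∑ s' ∈ P.erase s, ((s ∩ s').card : ℝ)) ≤ k - 1 := by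
      calc (∑ s' ∈ P.erase s, ((s ∩ s').card : ℝ))
          ≤ ∑ s' ∈ P.erase s, 1 := by
            refine Finset.sum_le_sum fun s' hs' => ?_
            have hmem := Finset.mem_erase.1 hs'
            exact_mod_cast inter_card_le_one hP hs hmem.2 (Ne.symm hmem.1)
        _ = ((P.erase s).card : ℝ) := by rw [Finset.sum_const, nsmul_eq_mul, mul_one]
        _ = k - 1 := by
            rw [Finset.card_erase_of_mem hs, hkdef]
            have h1le : 1 ≤ P.card := Finset.card_pos.2 ⟨s, hs⟩
            rw [Nat.cast_sub h1le, Nat.cast_one]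
    linarith
  have hZS : Z ≤ (k + (t : ℝ) - 1) * S := by
    rw [hZexp]
    have step1 : (∑ s ∈ P, ∑ s' ∈ P, ((s ∩ s').card : ℝ) * (y s * y s'))
        ≤ ∑ s ∈ P, ∑ s' ∈ P, ((s ∩ s').card : ℝ) * ((y s ^ 2 + y s' ^ 2) / 2) := by
      refine Finset.sum_le_sum fun s _ => Finset.sum_le_sum fun s' _ => ?_
      refine mul_le_mul_of_nonneg_left ?_ (by positivity)
      nlinarith [sq_nonneg (y s - y s')]
    have step2 : (∑ s ∈ P, ∑ s' ∈ P, ((s ∩ s').card : ℝ) * ((y s ^ 2 + y s' ^ 2) / 2))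
        = ∑ s ∈ P, (∑ s' ∈ P, ((s ∩ s').card : ℝ)) * y s ^ 2 := by
      have lhs_split : ∀ s s' : Finset V, ((s ∩ s').card : ℝ) * ((y s ^ 2 + y s' ^ 2) / 2)
          = ((s ∩ s').card : ℝ) * y s ^ 2 / 2 + ((s ∩ s').card : ℝ) * y s' ^ 2 / 2 := by
        intro s s'; ring
      simp_rw [lhs_split]
      rw [Finset.sum_congr rfl (fun s _ => Finset.sum_add_distrib), Finset.sum_add_distrib]
      have hswap : (∑ s ∈ P, ∑ s' ∈ P, ((s ∩ s').card : ℝ) * y s' ^ 2 / 2)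
          = ∑ s ∈ P, ∑ s' ∈ P, ((s ∩ s').card : ℝ) * y s ^ 2 / 2 := by
        rw [Finset.sum_comm]
        refine Finset.sum_congr rfl fun s _ => Finset.sum_congr rfl fun s' _ => ?_
        rw [Finset.inter_comm]
      rw [hswap]
      rw [← Finset.sum_add_distrib]
      refine Finset.sum_congr rfl fun s _ => ?_
      rw [← Finset.sum_add_distrib, Finset.sum_mul]
      refine Eq.trans (Finset.sum_congr rfl fun s' _ => by ring) rfl
    have step3 : (∑ s ∈ P, (∑ s' ∈ P, ((s ∩ s').card : ℝ)) * y s ^ 2)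
        ≤ ∑ s ∈ P, (k + (t : ℝ) - 1) * y s ^ 2 := by
      refine Finset.sum_le_sum fun s hs => ?_
      exact mul_le_mul_of_nonneg_right (hrow s hs) (sq_nonneg _)
    calc (∑ s ∈ P, ∑ s' ∈ P, ((s ∩ s').card : ℝ) * (y s * y s'))
        ≤ ∑ s ∈ P, ∑ s' ∈ P, ((s ∩ s').card : ℝ) * ((y s ^ 2 + y s' ^ 2) / 2) := step1
      _ = ∑ s ∈ P, (∑ s' ∈ P, ((s ∩ s').card : ℝ)) * y s ^ 2 := step2
      _ ≤ ∑ s ∈ P, (k + (t : ℝ) - 1) * y s ^ 2 := step3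
      _ = (k + (t : ℝ) - 1) * S := by rw [hS, Finset.mul_sum]
  -- From Cauchy–Schwarz and the Gram bound: S ≤ (k + t - 1) * X
  have hknonneg : (0:ℝ) ≤ k := by rw [hkdef]; positivity
  have hSX : S ≤ (k + (t : ℝ) - 1) * X := by
    rcases hSnonneg.eq_or_lt with hS0 | hSpos
    · rw [← hS0]
      have : (0:ℝ) ≤ k + (t:ℝ) - 1 := by linarith
      positivity
    · have h1 : S * S ≤ ((k + (t : ℝ) - 1) * X) * S := by
        calc S * S = S ^ 2 := (sq S).symm
          _ ≤ X * Z := hCS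
          _ ≤ X * ((k + (t : ℝ) - 1) * S) :=
              mul_le_mul_of_nonneg_left hZS (le_of_lt hXpos)
          _ = ((k + (t : ℝ) - 1) * X) * S := by ring
      exact le_of_mul_le_mul_right h1 hSpos
  -- D ≥ m * X
  have hDX : m * X ≤ D := by
    rw [hD, hX, Finset.mul_sum]
    refine Finset.sum_le_sum fun v _ => ?_
    exact mul_le_mul_of_nonneg_right (ceil_le_clique_count hP hc ht v) (sq_nonneg _)
  -- combine
  have hfinal : μ * X ≤ (k + (t : ℝ) - 1 - m) * X := by
    have e1 : (k + (t : ℝ) - 1 - m) * X = (k + (t : ℝ) - 1) * X - m * X := by ring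
    rw [e1]
    linarith [hSid, hSX, hDX]
  exact le_of_mul_le_mul_right hfinal hXpos

/-- The trivial clique partition of a graph into its edges. -/
lemma exists_edge_partition (G : SimpleGraph V) [DecidableRel G.Adj] (ht : 2 ≤ t) :
    ∃ P : Finset (Finset V), IsCliquePartition G P ∧ ∀ s ∈ P, s.card ≤ t := by
  classical
  refine ⟨(Finset.univ.filter fun p : V × V => G.Adj p.1 p.2).image fun p => {p.1, p.2},
    ⟨?_, ?_⟩, ?_⟩
  · intro s hs
    simp only [Finset.mem_image, Finset.mem_filter] at hs
    obtain ⟨p, ⟨-, hadj⟩, rfl⟩ := hs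
    intro a ha b hb hab
    simp only [Finset.coe_insert, Finset.coe_singleton, Set.mem_insert_iff,
      Set.mem_singleton_iff] at ha hb
    rcases ha with rfl | rfl <;> rcases hb with rfl | rfl
    · exact absurd rfl hab
    · exact hadj
    · exact hadj.symm
    · exact absurd rfl hab
  · intro u v huv
    have hcarduv : ({u, v} : Finset V).card = 2 := by
      rw [Finset.card_insert_of_notMem (Finset.notMem_singleton.2 huv.ne),
        Finset.card_singleton]
    refine ⟨{u, v}, ⟨?_, ?_, ?_⟩, ?_⟩
    · exact Finset.mem_image.2 ⟨(u, v), Finset.mem_filter.2 ⟨Finset.mem_univ _, huv⟩, rfl⟩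
    · simp
    · simp
    · rintro s ⟨hs, hu, hv⟩
      simp only [Finset.mem_image, Finset.mem_filter] at hs
      obtain ⟨p, ⟨-, hadj⟩, rfl⟩ := hs
      refine (Finset.eq_of_subset_of_card_le ?_ ?_).symm
      · intro w hw
        rcases Finset.mem_insert.1 hw with rfl | hw
        · exact hu
        · rw [Finset.mem_singleton.1 hw]; exact hv
      · rw [hcarduv]
        exact le_trans (Finset.card_insert_le _ _) (by simp)
  · intro s hs
    simp only [Finset.mem_image, Finset.mem_filter] at hs
    obtain ⟨p, ⟨-, -⟩, rfl⟩ := hs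
    exact le_trans (le_trans (Finset.card_insert_le _ _) (by simp)) ht

end Aux

/-- Spectral lower bound for `cp^{(t)}(G)`:
`cp^{(t)}(G) ≥ ρ(G) − t + 1 + ⌈δ(G)/(t−1)⌉`. -/
theorem cpT_ge_specRad [Fintype V] [DecidableEq V] (G : SimpleGraph V) [DecidableRel G.Adj]
    (t : ℕ) (ht : 2 ≤ t) (hconn : G.Connected) (hedge : G.edgeSet.Nonempty) :
    specRad G - t + 1 + (⌈(G.minDegree : ℝ) / ((t : ℝ) - 1)⌉ : ℤ) ≤ (cpT G t : ℝ) := by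
  classical
  have hne : {m | ∃ P : Finset (Finset V),
      IsCliquePartition G P ∧ (∀ s ∈ P, s.card ≤ t) ∧ P.card = m}.Nonempty := by
    obtain ⟨P₀, h1, h2⟩ := exists_edge_partition G ht
    exact ⟨P₀.card, P₀, h1, h2, rfl⟩
  have hmem : cpT G t ∈ {m | ∃ P : Finset (Finset V),
      IsCliquePartition G P ∧ (∀ s ∈ P, s.card ≤ t) ∧ P.card = m} := Nat.sInf_mem hne
  obtain ⟨P, hP, hc, hk⟩ := hmem
  set m : ℝ := ((⌈(G.minDegree : ℝ) / ((t : ℝ) - 1)⌉ : ℤ) : ℝ) with hm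
  have hbound : ∀ μ ∈ {μ : ℝ | Module.End.HasEigenvalue (Matrix.toLin' (G.adjMatrix ℝ)) μ},
      μ ≤ (cpT G t : ℝ) + (t : ℝ) - 1 - m := by
    intro μ hμ
    have h := eigenvalue_le hP hc ht hμ
    rwa [hk] at h
  have hnn : 0 ≤ (cpT G t : ℝ) + (t : ℝ) - 1 - m := by
    obtain ⟨v⟩ := hconn.nonempty
    have h1 := ceil_le_clique_count hP hc ht v
    have h2 : ((P.filter fun s => v ∈ s).card : ℝ) ≤ (P.card : ℝ) := by
      exact_mod_cast Finset.card_filter_le _ _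
    have h3 : (2 : ℝ) ≤ (t : ℝ) := by exact_mod_cast ht
    have h4 : (P.card : ℝ) = (cpT G t : ℝ) := by exact_mod_cast hk
    rw [← hm] at h1
    linarith
  have hsup : specRad G ≤ (cpT G t : ℝ) + (t : ℝ) - 1 - m := Real.sSup_le hbound hnn
  linarith
end

section
/- Let t ≥ 2 be an integer and let G be a finite connected simple graph that is regular and admits a K_t-decomposition 𝒬 = {Q_1, …, Q_v} such that any two distinct cliques of 𝒬 intersect in exactly one vertex. Then cp^{(t)}(G) = ρ(G) − t + 1 + ⌈δ(G)/(t−1)⌉, i.e., equality holds in the spectral lower bound for cp^{(t)}(G). -/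
open Finset SimpleGraph Polynomial

variable {V : Type*}

/-! Counting ordered pairs of adjacent vertices clique by clique gives
`∑ v, deg v = ∑_{Q} |Q| (|Q| - 1)` for every clique partition, so a partition into cliques of
at most `t` vertices has at least as many members as a `K_t`-decomposition: `cp^{(t)}(G) = |𝒬|`.
If `G` is `d`-regular, its spectral radius and minimum degree are `d`, and every vertex lies in
`r = d / (t - 1)` cliques of `𝒬`. Each clique other than a fixed `Q₀ ∈ 𝒬` meets `Q₀` in exactly
one vertex, so `|𝒬| = 1 + t (r - 1) = d - t + 1 + r`. -/

namespace IsCliquePartition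

variable [DecidableEq V] {G : SimpleGraph V} {P : Finset (Finset V)}

lemma neighborFinset_eq_biUnion [Fintype V] [DecidableRel G.Adj] (hP : IsCliquePartition G P)
    (x : V) : G.neighborFinset x = {s ∈ P | x ∈ s}.biUnion (·.erase x) := by
  ext y
  simp only [mem_neighborFinset, mem_biUnion, mem_filter, mem_erase]
  constructor
  · intro h
    obtain ⟨s, ⟨hs, hx, hy⟩, -⟩ := hP.2 x y h
    exact ⟨s, ⟨hs, hx⟩, h.ne', hy⟩
  · rintro ⟨s, ⟨hs, hx⟩, hyx, hy⟩
    exact hP.1 s hs hx hy hyx.symm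

lemma degree_eq_sum [Fintype V] [DecidableRel G.Adj] (hP : IsCliquePartition G P) (x : V) :
    G.degree x = ∑ s ∈ P with x ∈ s, (#s - 1) := by
  rw [← card_neighborFinset_eq_degree, hP.neighborFinset_eq_biUnion, card_biUnion]
  · exact sum_congr rfl fun s hs => card_erase_of_mem (mem_filter.mp hs).2
  · intro s₁ h₁ s₂ h₂ hne
    simp only [mem_coe, mem_filter] at h₁ h₂
    refine Finset.disjoint_left.mpr fun y hy₁ hy₂ => hne ?_
    rw [mem_erase] at hy₁ hy₂
    obtain ⟨s, -, huniq⟩ := hP.2 x y (hP.1 s₁ h₁.1 h₁.2 hy₁.2 hy₁.1.symm)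
    exact (huniq s₁ ⟨h₁.1, h₁.2, hy₁.2⟩).trans (huniq s₂ ⟨h₂.1, h₂.2, hy₂.2⟩).symm

lemma card_filter_mem_mul_eq_degree [Fintype V] [DecidableRel G.Adj]
    (hP : IsCliquePartition G P) {t : ℕ} (hcard : ∀ s ∈ P, #s = t) (x : V) :
    #{s ∈ P | x ∈ s} * (t - 1) = G.degree x := by
  rw [hP.degree_eq_sum, sum_congr rfl fun s hs => by rw [hcard s (mem_filter.mp hs).1],
    sum_const, smul_eq_mul]

lemma sum_degrees_eq [Fintype V] [DecidableRel G.Adj] (hP : IsCliquePartition G P) :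
    ∑ v, G.degree v = ∑ s ∈ P, #s * (#s - 1) := by
  simp_rw [hP.degree_eq_sum, sum_filter]
  rw [sum_comm]
  simp

lemma cpT_eq_card [Fintype V] {t : ℕ} (ht : 2 ≤ t) (hP : IsCliquePartition G P)
    (hcard : ∀ s ∈ P, #s = t) : cpT G t = #P := by
  classical
  have hmem : #P ∈ {m | ∃ Q : Finset (Finset V),
      IsCliquePartition G Q ∧ (∀ s ∈ Q, #s ≤ t) ∧ #Q = m} :=
    ⟨P, hP, fun s hs => (hcard s hs).le, rfl⟩
  refine le_antisymm (Nat.sInf_le hmem) (le_csInf ⟨_, hmem⟩ ?_)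
  rintro _ ⟨Q, hQ, hle, rfl⟩
  have hpos : 0 < t * (t - 1) := Nat.mul_pos (by omega) (by omega)
  refine Nat.le_of_mul_le_mul_right ?_ hpos
  calc #P * (t * (t - 1)) = ∑ s ∈ P, #s * (#s - 1) := by
        rw [sum_congr rfl fun s hs => by rw [hcard s hs], sum_const, smul_eq_mul]
    _ = ∑ s ∈ Q, #s * (#s - 1) := by rw [← hP.sum_degrees_eq, hQ.sum_degrees_eq]
    _ ≤ #Q * (t * (t - 1)) := by
        refine sum_le_card_nsmul _ _ _ fun s hs => ?_
        exact Nat.mul_le_mul (hle s hs) (Nat.sub_le_sub_right (hle s hs) 1)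

end IsCliquePartition

namespace SimpleGraph

variable [Fintype V] [DecidableEq V] {G : SimpleGraph V} [DecidableRel G.Adj]

lemma hasEigenvalue_of_isRegularOfDegree {α : Type*} [Field α] [Nonempty V] {d : ℕ}
    (hd : G.IsRegularOfDegree d) :
    Module.End.HasEigenvalue (Matrix.toLin' (G.adjMatrix α)) d := by
  refine Module.End.hasEigenvalue_of_hasEigenvector (x := Function.const V 1) ⟨?_, ?_⟩
  · rw [Module.End.mem_eigenspace_iff, Matrix.toLin'_apply]
    ext v
    simp [hd v]
  · exact Function.const_ne_zero.mpr one_ne_zero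

lemma abs_le_maxDegree_of_hasEigenvalue {μ : ℝ}
    (hμ : Module.End.HasEigenvalue (Matrix.toLin' (G.adjMatrix ℝ)) μ) : |μ| ≤ G.maxDegree := by
  obtain ⟨x, hx⟩ := hμ.exists_hasEigenvector
  obtain ⟨k, hk⟩ := Function.ne_iff.mp hx.2
  obtain ⟨i, -, hi⟩ := exists_max_image univ (fun j => |x j|) ⟨k, mem_univ k⟩
  have hxi : 0 < |x i| := (abs_pos.mpr hk).trans_le (hi k (mem_univ k))
  have heq : μ * x i = ∑ j ∈ G.neighborFinset i, x j := by
    rw [← adjMatrix_mulVec_apply, ← Matrix.toLin'_apply, hx.apply_eq_smul, Pi.smul_apply,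
      smul_eq_mul]
  refine le_of_mul_le_mul_right ?_ hxi
  calc |μ| * |x i| = |∑ j ∈ G.neighborFinset i, x j| := by rw [← abs_mul, heq]
    _ ≤ ∑ j ∈ G.neighborFinset i, |x j| := abs_sum_le_sum_abs _ _
    _ ≤ ∑ j ∈ G.neighborFinset i, |x i| := sum_le_sum fun j _ => hi j (mem_univ j)
    _ = G.degree i * |x i| := by rw [sum_const, card_neighborFinset_eq_degree, nsmul_eq_mul]
    _ ≤ G.maxDegree * |x i| := by gcongr; exact G.degree_le_maxDegree i

lemma specRad_eq_of_isRegularOfDegree [Nonempty V] {d : ℕ} (hd : G.IsRegularOfDegree d) :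
    specRad G = d := by
  refine IsGreatest.csSup_eq ⟨hasEigenvalue_of_isRegularOfDegree (α := ℝ) hd, fun μ hμ => ?_⟩
  calc μ ≤ |μ| := le_abs_self μ
    _ ≤ G.maxDegree := abs_le_maxDegree_of_hasEigenvalue hμ
    _ = d := by rw [hd.maxDegree_eq]

end SimpleGraph

lemma Finset.card_add_card_eq_of_card_inter_eq_one {α : Type*} [DecidableEq α]
    {P : Finset (Finset α)} {s₀ : Finset α} (hs₀ : s₀ ∈ P)
    (hint : ∀ s ∈ P, s ≠ s₀ → #(s₀ ∩ s) = 1) {r : ℕ} (hr : ∀ x ∈ s₀, #{s ∈ P | x ∈ s} = r) :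
    #P + #s₀ = #s₀ * r + 1 := by
  rw [← sum_card_inter hr, ← add_sum_erase P _ hs₀, inter_self,
    sum_congr rfl fun s hs => hint s (mem_of_mem_erase hs) (ne_of_mem_erase hs), sum_const,
    card_erase_of_mem hs₀, smul_eq_mul, mul_one]
  have := card_pos.mpr ⟨s₀, hs₀⟩
  omega

theorem cpT_eq_specRad_of_decomposition_general [Fintype V] [DecidableEq V] (G : SimpleGraph V)
    [DecidableRel G.Adj] (t : ℕ) (ht : 2 ≤ t)
    (hreg : ∃ d, G.IsRegularOfDegree d)
    (P : Finset (Finset V)) (hPne : P.Nonempty) (hP : IsCliquePartition G P)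
    (hcard : ∀ s ∈ P, s.card = t)
    (hint : ∀ s₁ ∈ P, ∀ s₂ ∈ P, s₁ ≠ s₂ → (s₁ ∩ s₂).card = 1) :
    (cpT G t : ℝ) = specRad G - t + 1 + (⌈(G.minDegree : ℝ) / ((t : ℝ) - 1)⌉ : ℤ) := by
  obtain ⟨d, hreg⟩ := hreg
  obtain ⟨s₀, hs₀⟩ := hPne
  obtain ⟨x₀, -⟩ : s₀.Nonempty := card_pos.mp (by rw [hcard s₀ hs₀]; omega)
  have : Nonempty V := ⟨x₀⟩
  set r := #{s ∈ P | x₀ ∈ s}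
  have hdeg (x : V) : #{s ∈ P | x ∈ s} * (t - 1) = d :=
    (hP.card_filter_mem_mul_eq_degree hcard x).trans (hreg x)
  have hr (x : V) : #{s ∈ P | x ∈ s} = r :=
    Nat.eq_of_mul_eq_mul_right (by omega) ((hdeg x).trans (hdeg x₀).symm)
  have hPcard : #P + t = t * r + 1 := by
    simpa only [hcard s₀ hs₀] using card_add_card_eq_of_card_inter_eq_one hs₀
      (fun s hs hne => hint s₀ hs₀ s hs hne.symm) fun x _ => hr x
  have hceil : ⌈(d : ℝ) / ((t : ℝ) - 1)⌉ = r := by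
    have : (t : ℝ) - 1 ≠ 0 := by
      have : (2 : ℝ) ≤ t := by exact_mod_cast ht
      linarith
    rw [← hdeg x₀, Nat.cast_mul, Nat.cast_sub (by omega), Nat.cast_one,
      mul_div_cancel_right₀ _ this, Int.ceil_natCast]
  rw [hP.cpT_eq_card ht hcard, specRad_eq_of_isRegularOfDegree hreg, hreg.minDegree_eq, hceil,
    ← hdeg x₀]
  have : (#P : ℝ) + t = t * r + 1 := by exact_mod_cast hPcard
  push_cast [Nat.cast_sub (by omega : 1 ≤ t)]
  linarith

/-- If a connected regular graph `G` admits a `K_t`-decomposition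
`𝒬 = {Q_1, …, Q_v}` in which any two distinct cliques intersect in exactly one vertex,
then equality holds in the spectral lower bound for `cp^{(t)}(G)`. -/
theorem cpT_eq_specRad_of_decomposition [Fintype V] [DecidableEq V] (G : SimpleGraph V)
    [DecidableRel G.Adj] (t : ℕ) (ht : 2 ≤ t) (hconn : G.Connected)
    (hreg : ∃ d, G.IsRegularOfDegree d)
    (P : Finset (Finset V)) (hPne : P.Nonempty) (hP : IsCliquePartition G P)
    (hcard : ∀ s ∈ P, s.card = t)
    (hint : ∀ s₁ ∈ P, ∀ s₂ ∈ P, s₁ ≠ s₂ → (s₁ ∩ s₂).card = 1) :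
    (cpT G t : ℝ) = specRad G - t + 1 + (⌈(G.minDegree : ℝ) / ((t : ℝ) - 1)⌉ : ℤ) :=
  cpT_eq_specRad_of_decomposition_general G t ht hreg P hPne hP hcard hint
end

section
/- Let t ≥ 2 be an integer and let G be a finite connected simple graph with n vertices, at least one edge, minimum degree δ(G) and spectral radius ρ(G). Then π_t(G) ≥ ρ(G) + (n − t + 1)·⌈δ(G)/(t−1)⌉. -/
open Finset SimpleGraph Polynomial

variable {V : Type*}

/-- `piT G t` : the minimum total size of a clique partition of `G` in which
every clique has at most `t` vertices. -/
noncomputable def piT [DecidableEq V] (G : SimpleGraph V) (t : ℕ) : ℕ :=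
  sInf {m | ∃ P : Finset (Finset V),
    IsCliquePartition G P ∧ (∀ s ∈ P, s.card ≤ t) ∧ ∑ s ∈ P, s.card = m}

/-- `piTotal G` : the minimum total size of a clique partition of `G`. -/
noncomputable def piTotal [DecidableEq V] (G : SimpleGraph V) : ℕ :=
  sInf {m | ∃ P : Finset (Finset V), IsCliquePartition G P ∧ ∑ s ∈ P, s.card = m}

/-- `kT G t` : the maximum number of pairwise edge-disjoint `t`-cliques in `G`
(`t`-cliques are edge-disjoint iff they share at most one vertex). -/
noncomputable def kT [DecidableEq V] (G : SimpleGraph V) (t : ℕ) : ℕ :=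
  sSup {m | ∃ S : Finset (Finset V), (∀ s ∈ S, G.IsNClique t s) ∧
    (∀ s₁ ∈ S, ∀ s₂ ∈ S, s₁ ≠ s₂ → (s₁ ∩ s₂).card ≤ 1) ∧ S.card = m}

/-- Auxiliary double-counting lemma: summing `f` over the members of each part equals
summing `f v` weighted by the number of parts containing `v`. -/
lemma sum_over_parts [Fintype V] [DecidableEq V] {M : Type*} [AddCommMonoid M]
    (P : Finset (Finset V)) (f : V → M) :
    ∑ Q ∈ P, ∑ v ∈ Q, f v = ∑ v, (P.filter fun Q => v ∈ Q).card • f v := by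
  classical
  have h1 : ∀ Q ∈ P, ∑ v ∈ Q, f v = ∑ v, if v ∈ Q then f v else 0 := by
    intro Q _
    rw [Finset.sum_ite_mem, Finset.univ_inter]
  rw [Finset.sum_congr rfl h1, Finset.sum_comm]
  refine Finset.sum_congr rfl fun v _ => ?_
  rw [Finset.sum_ite, Finset.sum_const, Finset.sum_const_zero, add_zero]

/-- Spectral lower bound for the minimum total size `π_t(G)` of a
clique partition with cliques of at most `t` vertices:
`π_t(G) ≥ ρ(G) + (n − t + 1)·⌈δ(G)/(t−1)⌉`. -/
theorem piT_ge_specRad [Fintype V] [DecidableEq V] (G : SimpleGraph V) [DecidableRel G.Adj]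
    (t : ℕ) (ht : 2 ≤ t) (hconn : G.Connected) (hedge : G.edgeSet.Nonempty) :
    specRad G + ((Fintype.card V : ℝ) - t + 1) *
      (⌈(G.minDegree : ℝ) / ((t : ℝ) - 1)⌉ : ℤ) ≤ (piT G t : ℝ) := by
  classical
  obtain ⟨u₀, v₀, hadj⟩ : ∃ u v : V, G.Adj u v := by
    obtain ⟨e, he⟩ := hedge
    induction e using Sym2.ind with
    | _ u v => exact ⟨u, v, he⟩
  have htR : (0 : ℝ) < (t : ℝ) - 1 := by
    have h2 : (2 : ℝ) ≤ (t : ℝ) := by exact_mod_cast ht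
    linarith
  set cR : ℝ := ((⌈(G.minDegree : ℝ) / ((t : ℝ) - 1)⌉ : ℤ) : ℝ) with hcRdef
  have hcR0 : 0 ≤ cR := by
    have h0 : (0:ℝ) ≤ (G.minDegree : ℝ) / ((t : ℝ) - 1) :=
      div_nonneg (by positivity) htR.le
    have h1 : (0:ℤ) ≤ ⌈(G.minDegree : ℝ) / ((t : ℝ) - 1)⌉ := Int.ceil_nonneg h0
    rw [hcRdef]
    exact_mod_cast h1
  -- the trivial partition into single edges witnesses that the defining set is nonempty
  set P₀ : Finset (Finset V) :=
      Finset.univ.filter (fun S : Finset V => ∃ u v : V, G.Adj u v ∧ S = {u, v}) with hP₀def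
  have hP₀mem : ∀ S : Finset V, S ∈ P₀ ↔ ∃ u v : V, G.Adj u v ∧ S = {u, v} := by
    intro S; simp [hP₀def]
  have hcard_pair : ∀ u v : V, u ≠ v → ({u, v} : Finset V).card = 2 := by
    intro u v huv
    rw [Finset.card_insert_of_notMem (by simp [huv]), Finset.card_singleton]
  have hpair_le : ∀ u v : V, ({u, v} : Finset V).card ≤ 2 := by
    intro u v
    refine le_trans (Finset.card_insert_le _ _) ?_
    simp
  have hPart₀ : IsCliquePartition G P₀ := by
    constructor
    · intro S hS
      obtain ⟨a, b, hab, rfl⟩ := (hP₀mem S).1 hS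
      intro x hx y hy hxy
      simp only [Finset.coe_insert, Finset.coe_singleton, Set.mem_insert_iff,
        Set.mem_singleton_iff] at hx hy
      rcases hx with rfl | rfl <;> rcases hy with rfl | rfl
      · exact absurd rfl hxy
      · exact hab
      · exact hab.symm
      · exact absurd rfl hxy
    · intro u v huv
      refine ⟨{u, v}, ⟨(hP₀mem _).2 ⟨u, v, huv, rfl⟩, by simp, by simp⟩, ?_⟩
      rintro S ⟨hS, huS, hvS⟩
      obtain ⟨a, b, hab, rfl⟩ := (hP₀mem S).1 hS
      refine (Finset.eq_of_subset_of_card_le ?_ ?_).symm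
      · intro x hx
        simp only [Finset.mem_insert, Finset.mem_singleton] at hx
        rcases hx with rfl | rfl
        · exact huS
        · exact hvS
      · calc ({a,b} : Finset V).card ≤ 2 := hpair_le a b
          _ = ({u,v} : Finset V).card := (hcard_pair u v huv.ne).symm
  have hne : {m | ∃ P : Finset (Finset V),
      IsCliquePartition G P ∧ (∀ s ∈ P, s.card ≤ t) ∧ ∑ s ∈ P, s.card = m}.Nonempty := by
    refine ⟨∑ s ∈ P₀, s.card, P₀, hPart₀, ?_, rfl⟩
    intro S hS
    obtain ⟨a, b, hab, rfl⟩ := (hP₀mem S).1 hS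
    exact le_trans (hpair_le a b) ht
  obtain ⟨P, hPart, hPsize, hPsum⟩ := Nat.sInf_mem hne
  set m : V → ℕ := fun v => (P.filter fun Q => v ∈ Q).card with hmdef
  -- each vertex lies in at least one clique of the partition
  have hm1 : ∀ v : V, 1 ≤ m v := by
    intro v
    have hvadj : ∃ w, G.Adj v w := by
      have hnt : Nontrivial V := ⟨⟨u₀, v₀, hadj.ne⟩⟩
      obtain ⟨w, hwv⟩ := exists_ne v
      obtain ⟨p⟩ := hconn.preconnected v w
      have hnil : ¬ p.Nil := SimpleGraph.Walk.not_nil_of_ne hwv.symm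
      exact ⟨p.getVert 1, p.adj_snd hnil⟩
    obtain ⟨w, hvw⟩ := hvadj
    obtain ⟨Q, ⟨hQP, hvQ, -⟩, -⟩ := hPart.2 v w hvw
    exact Finset.card_pos.2 ⟨Q, Finset.mem_filter.2 ⟨hQP, hvQ⟩⟩
  have hm0 : ∀ v : V, (0:ℝ) < (m v : ℝ) := by
    intro v
    exact_mod_cast hm1 v
  -- degree bound : d(v) ≤ (t-1) * m(v)
  have hdeg : ∀ v : V, G.degree v ≤ (t - 1) * m v := by
    intro v
    have hsub : G.neighborFinset v ⊆ (P.filter fun Q => v ∈ Q).biUnion (fun Q => Q.erase v) := by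
      intro u hu
      rw [SimpleGraph.mem_neighborFinset] at hu
      obtain ⟨Q, ⟨hQP, hvQ, huQ⟩, -⟩ := hPart.2 v u hu
      exact Finset.mem_biUnion.2
        ⟨Q, Finset.mem_filter.2 ⟨hQP, hvQ⟩, Finset.mem_erase.2 ⟨hu.ne', huQ⟩⟩
    calc G.degree v ≤ ((P.filter fun Q => v ∈ Q).biUnion (fun Q => Q.erase v)).card :=
          Finset.card_le_card hsub
      _ ≤ ∑ Q ∈ P.filter (fun Q => v ∈ Q), (Q.erase v).card := Finset.card_biUnion_le
      _ ≤ ∑ _Q ∈ P.filter (fun Q => v ∈ Q), (t-1) := by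
          refine Finset.sum_le_sum fun Q hQ => ?_
          rw [Finset.mem_filter] at hQ
          rw [Finset.card_erase_of_mem hQ.2]
          exact Nat.sub_le_sub_right (hPsize Q hQ.1) 1
      _ = (m v) * (t-1) := by rw [Finset.sum_const, smul_eq_mul]
      _ = (t-1) * m v := Nat.mul_comm _ _
  -- hence c ≤ m(v)
  have hcRm : ∀ v : V, cR ≤ (m v : ℝ) := by
    intro v
    have h1 : (G.minDegree : ℝ) / ((t:ℝ)-1) ≤ ((m v : ℤ) : ℝ) := by
      rw [div_le_iff₀ htR]
      have h2 : G.minDegree ≤ (t-1) * m v := le_trans (G.minDegree_le_degree v) (hdeg v)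
      have h3 : ((t-1 : ℕ) : ℝ) = (t:ℝ) - 1 := by
        rw [Nat.cast_sub (by omega : 1 ≤ t), Nat.cast_one]
      calc (G.minDegree : ℝ) ≤ (((t-1) * m v : ℕ) : ℝ) := by exact_mod_cast h2
        _ = ((m v : ℤ) : ℝ) * ((t:ℝ) - 1) := by
            push_cast [h3]
            ring
    have h4 := Int.ceil_le.2 h1
    rw [hcRdef]
    exact_mod_cast h4
  -- the maximal clique-weight R
  have hPne : P.Nonempty := by
    obtain ⟨Q, ⟨hQP, -, -⟩, -⟩ := hPart.2 u₀ v₀ hadj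
    exact ⟨Q, hQP⟩
  obtain ⟨Qm, hQmP, hQm⟩ := Finset.exists_mem_eq_sup P hPne (fun Q => ∑ v ∈ Q, m v)
  set R : ℝ := ((P.sup fun Q => ∑ v ∈ Q, m v : ℕ) : ℝ) with hRdef
  have hRle : ∀ Q ∈ P, (∑ v ∈ Q, (m v:ℝ)) ≤ R := by
    intro Q hQ
    have h1 : (∑ v ∈ Q, m v) ≤ P.sup fun Q => ∑ v ∈ Q, m v :=
      Finset.le_sup (f := fun Q => ∑ v ∈ Q, m v) hQ
    rw [hRdef]
    exact_mod_cast h1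
  have hcRR : cR ≤ R := by
    obtain ⟨Qe, ⟨hQeP, hu₀, hv₀⟩, -⟩ := hPart.2 u₀ v₀ hadj
    calc cR ≤ (m u₀ : ℝ) := hcRm u₀
      _ ≤ ∑ v ∈ Qe, (m v : ℝ) :=
          Finset.single_le_sum (f := fun v => (m v : ℝ)) (fun v _ => by positivity) hu₀
      _ ≤ R := hRle Qe hQeP
  -- spectral bound : every eigenvalue is at most R - cR
  have hspec : specRad G ≤ R - cR := by
    unfold specRad
    apply Real.sSup_le _ (by linarith)
    intro μ hμ
    obtain ⟨x, hx⟩ := Module.End.HasEigenvalue.exists_hasEigenvector hμ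
    set S : ℝ := ∑ v, x v ^ 2 with hSdef
    have hS0 : 0 < S := by
      obtain ⟨v, hv⟩ := Function.ne_iff.1 hx.right
      refine Finset.sum_pos' (fun i _ => sq_nonneg _) ⟨v, Finset.mem_univ v, ?_⟩
      have : x v ≠ 0 := hv
      positivity
    have hmu : ∀ u : V, ∑ w, (if G.Adj u w then x w else 0) = μ * x u := by
      intro u
      have h1 := congrFun hx.apply_eq_smul u
      rw [Matrix.toLin'_apply] at h1
      simpa [Matrix.mulVec, dotProduct, SimpleGraph.adjMatrix_apply,
        ite_mul, one_mul, zero_mul] using h1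
    -- expanding the square of a clique sum
    have key1 : ∀ Q : Finset V, (∑ v ∈ Q, x v)^2
        = ∑ u, ∑ w, (if u ∈ Q ∧ w ∈ Q then x u * x w else 0) := by
      intro Q
      have h2 : ∀ u : V, ∑ w, (if u ∈ Q ∧ w ∈ Q then x u * x w else 0)
          = if u ∈ Q then ∑ w ∈ Q, x u * x w else 0 := by
        intro u
        by_cases hu : u ∈ Q
        · rw [if_pos hu]
          rw [show (fun w => if u ∈ Q ∧ w ∈ Q then x u * x w else 0)
              = fun w => if w ∈ Q then x u * x w else 0 from
            funext fun w => by simp [hu]]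
          rw [Finset.sum_ite_mem, Finset.univ_inter]
        · rw [if_neg hu]
          refine Finset.sum_eq_zero fun w _ => ?_
          simp [hu]
      rw [Finset.sum_congr rfl fun u _ => h2 u]
      rw [Finset.sum_ite_mem, Finset.univ_inter]
      rw [sq, Finset.sum_mul_sum]
    -- counting cliques containing a given pair
    have key3 : ∀ u w : V, ∑ Q ∈ P, (if u ∈ Q ∧ w ∈ Q then x u * x w else 0)
        = (if G.Adj u w then x u * x w else 0)
          + (if u = w then (m u:ℝ) * (x u * x w) else 0) := by
      intro u w
      rw [Finset.sum_ite, Finset.sum_const, Finset.sum_const_zero, add_zero, nsmul_eq_mul]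
      by_cases huw : u = w
      · subst huw
        have hfil : (P.filter fun Q => u ∈ Q ∧ u ∈ Q) = P.filter fun Q => u ∈ Q := by
          simp
        rw [hfil, if_neg (G.irrefl), if_pos rfl, zero_add]
      · by_cases hadj' : G.Adj u w
        · have hone : (P.filter fun Q => u ∈ Q ∧ w ∈ Q).card = 1 := by
            obtain ⟨Q₀, hQ₀, huniq⟩ := hPart.2 u w hadj'
            rw [Finset.card_eq_one]
            refine ⟨Q₀, ?_⟩
            ext Q
            simp only [Finset.mem_filter, Finset.mem_singleton]
            constructor
            · rintro ⟨hQP, hu, hw⟩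
              exact huniq Q ⟨hQP, hu, hw⟩
            · rintro rfl
              exact ⟨hQ₀.1, hQ₀.2.1, hQ₀.2.2⟩
          rw [hone, if_pos hadj', if_neg huw, add_zero, Nat.cast_one, one_mul]
        · have hzero : (P.filter fun Q => u ∈ Q ∧ w ∈ Q).card = 0 := by
            rw [Finset.card_eq_zero, Finset.filter_eq_empty_iff]
            rintro Q hQ ⟨hu, hw⟩
            exact hadj' (hPart.1 Q hQ (Finset.mem_coe.2 hu) (Finset.mem_coe.2 hw) huw)
          rw [hzero, if_neg hadj', if_neg huw, add_zero, Nat.cast_zero, zero_mul]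
    -- the quadratic form identity
    have key2 : ∑ Q ∈ P, (∑ v ∈ Q, x v)^2
        = (∑ u, ∑ w, (if G.Adj u w then x u * x w else 0)) + ∑ v, (m v:ℝ) * x v ^ 2 := by
      calc ∑ Q ∈ P, (∑ v ∈ Q, x v)^2
          = ∑ Q ∈ P, ∑ u, ∑ w, (if u ∈ Q ∧ w ∈ Q then x u * x w else 0) :=
            Finset.sum_congr rfl fun Q _ => key1 Q
        _ = ∑ u, ∑ Q ∈ P, ∑ w, (if u ∈ Q ∧ w ∈ Q then x u * x w else 0) := Finset.sum_comm
        _ = ∑ u, ∑ w, ∑ Q ∈ P, (if u ∈ Q ∧ w ∈ Q then x u * x w else 0) :=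
            Finset.sum_congr rfl fun u _ => Finset.sum_comm
        _ = ∑ u, ∑ w, ((if G.Adj u w then x u * x w else 0)
              + (if u = w then (m u:ℝ) * (x u * x w) else 0)) :=
            Finset.sum_congr rfl fun u _ => Finset.sum_congr rfl fun w _ => key3 u w
        _ = (∑ u, ∑ w, (if G.Adj u w then x u * x w else 0))
              + ∑ u, ∑ w, (if u = w then (m u:ℝ) * (x u * x w) else 0) := by
            refine Eq.trans (Finset.sum_congr rfl fun u _ => Finset.sum_add_distrib) ?_
            exact Finset.sum_add_distrib
        _ = (∑ u, ∑ w, (if G.Adj u w then x u * x w else 0)) + ∑ v, (m v:ℝ) * x v ^ 2 := by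
            congr 1
            refine Finset.sum_congr rfl fun u _ => ?_
            rw [Finset.sum_ite_eq, if_pos (Finset.mem_univ u)]
            ring
    -- the eigen-equation gives the quadratic form value
    have hE : (∑ u, ∑ w, (if G.Adj u w then x u * x w else 0)) = μ * S := by
      calc (∑ u, ∑ w, (if G.Adj u w then x u * x w else 0))
          = ∑ u, x u * (∑ w, if G.Adj u w then x w else 0) := by
            refine Finset.sum_congr rfl fun u _ => ?_
            rw [Finset.mul_sum]
            exact Finset.sum_congr rfl fun w _ => by rw [mul_ite, mul_zero]
        _ = ∑ u, x u * (μ * x u) := Finset.sum_congr rfl fun u _ => by rw [hmu u]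
        _ = μ * S := by
            rw [hSdef, Finset.mul_sum]
            exact Finset.sum_congr rfl fun u _ => by ring
    -- Cauchy-Schwarz bound on the clique sums
    have hCS : ∑ Q ∈ P, (∑ v ∈ Q, x v)^2 ≤ R * S := by
      have h1 : ∀ Q ∈ P, (∑ v ∈ Q, x v)^2 ≤ R * ∑ v ∈ Q, x v^2 / (m v : ℝ) := by
        intro Q hQ
        have hcs := Finset.sum_sq_le_sum_mul_sum_of_sq_eq_mul Q
          (r := fun v => x v) (f := fun v => (m v : ℝ)) (g := fun v => x v ^ 2 / (m v : ℝ))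
          (fun v _ => (hm0 v).le)
          (fun v _ => div_nonneg (sq_nonneg _) (hm0 v).le)
          (fun v _ => by rw [mul_div_cancel₀ _ (hm0 v).ne'])
        refine le_trans hcs ?_
        have h2 : (0:ℝ) ≤ ∑ v ∈ Q, x v^2 / (m v : ℝ) :=
          Finset.sum_nonneg fun v _ => div_nonneg (sq_nonneg _) (hm0 v).le
        exact mul_le_mul_of_nonneg_right (hRle Q hQ) h2
      calc ∑ Q ∈ P, (∑ v ∈ Q, x v)^2 ≤ ∑ Q ∈ P, R * ∑ v ∈ Q, x v^2/(m v : ℝ) :=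
            Finset.sum_le_sum h1
        _ = R * ∑ Q ∈ P, ∑ v ∈ Q, x v^2/(m v : ℝ) := by rw [Finset.mul_sum]
        _ = R * ∑ v, (m v) • (x v^2 / (m v : ℝ)) := by
            rw [sum_over_parts P (fun v => x v^2 / (m v : ℝ))]
        _ = R * S := by
            rw [hSdef]
            congr 1
            refine Finset.sum_congr rfl fun v _ => ?_
            rw [nsmul_eq_mul, mul_comm, div_mul_cancel₀ _ (hm0 v).ne']
    have hlow : cR * S ≤ ∑ v, (m v:ℝ) * x v^2 := by
      rw [hSdef, Finset.mul_sum]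
      exact Finset.sum_le_sum fun v _ => mul_le_mul_of_nonneg_right (hcRm v) (sq_nonneg _)
    have hfin : μ * S ≤ (R - cR) * S := by nlinarith [key2, hE, hCS, hlow]
    exact le_of_mul_le_mul_right hfin hS0
  -- total size computation
  have hQmt : Qm.card ≤ t := hPsize Qm hQmP
  have hswapN : ∑ s ∈ P, s.card = ∑ v, m v := by
    have h1 : ∀ Q ∈ P, Q.card = ∑ v ∈ Q, 1 := fun Q _ => Finset.card_eq_sum_ones Q
    rw [Finset.sum_congr rfl h1, sum_over_parts P (fun _ => 1)]
    exact Finset.sum_congr rfl fun v _ => by rw [smul_eq_mul, mul_one]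
  have hfin1 : (piT G t : ℝ) = ∑ v, (m v : ℝ) := by
    have h1 : piT G t = ∑ s ∈ P, s.card := hPsum.symm
    rw [h1, hswapN]
    exact Nat.cast_sum _ _
  have hsplit : ∑ v, (m v:ℝ) = ∑ v ∈ Finset.univ \ Qm, (m v:ℝ) + ∑ v ∈ Qm, (m v:ℝ) :=
    (Finset.sum_sdiff (Finset.subset_univ Qm)).symm
  have h6 : R = ∑ v ∈ Qm, (m v:ℝ) := by
    rw [hRdef, hQm]
    push_cast
    rfl
  have h7 : ((Fintype.card V : ℝ) - Qm.card) * cR ≤ ∑ v ∈ Finset.univ \ Qm, (m v:ℝ) := by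
    have hcard : (((Finset.univ \ Qm).card : ℕ) : ℝ) = (Fintype.card V : ℝ) - Qm.card := by
      rw [Finset.card_sdiff_of_subset (Finset.subset_univ Qm), Finset.card_univ,
        Nat.cast_sub (Finset.card_le_univ Qm)]
    calc ((Fintype.card V : ℝ) - Qm.card) * cR
        = (((Finset.univ \ Qm).card : ℕ) : ℝ) * cR := by rw [hcard]
      _ = ∑ _v ∈ Finset.univ \ Qm, cR := by rw [Finset.sum_const, nsmul_eq_mul]
      _ ≤ ∑ v ∈ Finset.univ \ Qm, (m v:ℝ) := Finset.sum_le_sum fun v _ => hcRm v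
  have h8 : ((Fintype.card V : ℝ) - t) * cR ≤ ((Fintype.card V : ℝ) - Qm.card) * cR := by
    refine mul_le_mul_of_nonneg_right ?_ hcR0
    have hc : (Qm.card : ℝ) ≤ (t : ℝ) := by exact_mod_cast hQmt
    linarith
  have hexp : ((Fintype.card V : ℝ) - t + 1) * cR = ((Fintype.card V : ℝ) - t) * cR + cR := by
    ring
  rw [hfin1, hsplit, ← h6]
  linarith [hspec, h7, h8, hexp]
end

section
/- Let t ≥ 2 be an integer and let G be a finite connected simple graph with n vertices and at least one edge. Then π_t(G) = ρ(G) + (n − t + 1)·⌈δ(G)/(t−1)⌉ if and only if G is regular and admits a K_t-decomposition. -/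
open Finset SimpleGraph Polynomial

variable {V : Type*}

section Aux
variable [Fintype V] [DecidableEq V] {G : SimpleGraph V} [DecidableRel G.Adj]

lemma cliquePartition_degree {P : Finset (Finset V)}
    (hP : IsCliquePartition G P) (v : V) :
    G.degree v = ∑ Q ∈ P.filter (fun Q => v ∈ Q), (Q.card - 1) := by
  classical
  set f : V → Finset V := fun u => if h : G.Adj v u then (hP.2 v u h).exists.choose else ∅ with hf
  have hfspec : ∀ u, G.Adj v u → f u ∈ P ∧ v ∈ f u ∧ u ∈ f u := by
    intro u h
    have := (hP.2 v u h).exists.choose_spec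
    simpa only [hf, dif_pos h] using this
  have hmap : ∀ u ∈ G.neighborFinset v, f u ∈ P.filter (fun Q => v ∈ Q) := by
    intro u hu
    rw [SimpleGraph.mem_neighborFinset] at hu
    obtain ⟨h1, h2, _⟩ := hfspec u hu
    exact Finset.mem_filter.mpr ⟨h1, h2⟩
  have hcount := Finset.card_eq_sum_card_fiberwise hmap
  rw [← G.card_neighborFinset_eq_degree, hcount]
  refine Finset.sum_congr rfl ?_
  intro Q hQ
  obtain ⟨hQP, hvQ⟩ := Finset.mem_filter.mp hQ
  have hfib : (G.neighborFinset v).filter (fun u => f u = Q) = Q.erase v := by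
    ext u
    simp only [Finset.mem_filter, SimpleGraph.mem_neighborFinset, Finset.mem_erase]
    constructor
    · rintro ⟨hadj, rfl⟩
      exact ⟨fun h => (G.ne_of_adj hadj) h.symm, (hfspec u hadj).2.2⟩
    · rintro ⟨hne, huQ⟩
      have hadj : G.Adj v u := hP.1 Q hQP hvQ huQ (fun h => hne h.symm)
      refine ⟨hadj, ?_⟩
      exact ((hP.2 v u hadj).unique
        ⟨(hfspec u hadj).1, (hfspec u hadj).2.1, (hfspec u hadj).2.2⟩ ⟨hQP, hvQ, huQ⟩)
  rw [hfib, Finset.card_erase_of_mem hvQ]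

lemma cliquePartition_sum_card (P : Finset (Finset V)) :
    ∑ Q ∈ P, Q.card = ∑ v : V, (P.filter (fun Q => v ∈ Q)).card := by
  simp only [Finset.card_filter]
  rw [Finset.sum_comm]
  refine Finset.sum_congr rfl fun Q _ => ?_
  rw [Finset.sum_ite_mem, Finset.univ_inter, Finset.card_eq_sum_ones]

def pairFinset : Sym2 V → Finset V :=
  Sym2.lift ⟨fun a b => {a, b}, fun a b => Finset.pair_comm a b⟩

lemma edgePartition (G : SimpleGraph V) [DecidableRel G.Adj] :
    IsCliquePartition G (G.edgeFinset.image pairFinset) ∧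
      ∀ s ∈ G.edgeFinset.image pairFinset, s.card = 2 := by
  have hpm : ∀ a b : V, pairFinset s(a, b) = {a, b} := fun a b => rfl
  have hcard : ∀ s ∈ G.edgeFinset.image pairFinset, s.card = 2 := by
    intro s hs
    obtain ⟨e, he, rfl⟩ := Finset.mem_image.mp hs
    induction e with
    | _ a b =>
      rw [SimpleGraph.mem_edgeFinset, SimpleGraph.mem_edgeSet] at he
      rw [hpm, Finset.card_pair (G.ne_of_adj he)]
  refine ⟨⟨?_, ?_⟩, hcard⟩
  · intro s hs
    obtain ⟨e, he, rfl⟩ := Finset.mem_image.mp hs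
    induction e with
    | _ a b =>
      rw [SimpleGraph.mem_edgeFinset, SimpleGraph.mem_edgeSet] at he
      rw [hpm]
      intro x hx y hy hxy
      simp only [Finset.coe_insert, Finset.coe_singleton, Set.mem_insert_iff,
        Set.mem_singleton_iff] at hx hy
      rcases hx with rfl | rfl <;> rcases hy with rfl | rfl
      · exact absurd rfl hxy
      · exact he
      · exact he.symm
      · exact absurd rfl hxy
  · intro u v huv
    refine ⟨pairFinset s(u, v), ⟨Finset.mem_image_of_mem _ (by
        rw [SimpleGraph.mem_edgeFinset, SimpleGraph.mem_edgeSet]; exact huv),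
        by rw [hpm]; simp, by rw [hpm]; simp⟩, ?_⟩
    rintro s ⟨hs, hus, hvs⟩
    have h2 : s.card = 2 := hcard s hs
    have hsub : ({u, v} : Finset V) ⊆ s := by
      intro x hx
      rcases Finset.mem_insert.mp hx with rfl | hx
      · exact hus
      · rw [Finset.mem_singleton] at hx; subst hx; exact hvs
    have : s = ({u, v} : Finset V) := by
      refine (Finset.eq_of_subset_of_card_le hsub ?_).symm
      rw [h2, Finset.card_pair (G.ne_of_adj huv)]
    rw [this, hpm]

lemma ceil_le_r {P : Finset (Finset V)} (hP : IsCliquePartition G P) {k : ℕ}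
    (hk : 1 ≤ k) (hcards : ∀ s ∈ P, s.card ≤ k + 1) (v : V) :
    ⌈(G.degree v : ℝ) / (k : ℝ)⌉ ≤ ((P.filter (fun Q => v ∈ Q)).card : ℤ) := by
  have hkpos : (0 : ℝ) < k := by exact_mod_cast hk
  have hdeg : G.degree v ≤ (P.filter (fun Q => v ∈ Q)).card * k := by
    rw [cliquePartition_degree hP v]
    calc ∑ Q ∈ P.filter (fun Q => v ∈ Q), (Q.card - 1)
        ≤ ∑ _Q ∈ P.filter (fun Q => v ∈ Q), k := by
          refine Finset.sum_le_sum fun Q hQ => ?_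
          have := hcards Q (Finset.mem_filter.mp hQ).1
          omega
    _ = (P.filter (fun Q => v ∈ Q)).card * k := by
          rw [Finset.sum_const, smul_eq_mul]
  rw [Int.ceil_le, div_le_iff₀ hkpos]
  exact_mod_cast hdeg

lemma eigen_equation {μ : ℝ} {x : V → ℝ}
    (hx : Module.End.HasEigenvector (Matrix.toLin' (G.adjMatrix ℝ)) μ x) (v : V) :
    ∑ u ∈ G.neighborFinset v, x u = μ * x v := by
  have h := Module.End.mem_eigenspace_iff.mp hx.1
  have := congrFun h v
  rw [Matrix.toLin'_apply] at this
  simpa using this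

lemma eig_abs_le {μ : ℝ}
    (hμ : Module.End.HasEigenvalue (Matrix.toLin' (G.adjMatrix ℝ)) μ)
    {b : V → ℝ} (hb : ∀ v, 0 < b v) {R : ℝ}
    (hrow : ∀ v, ∑ u ∈ G.neighborFinset v, b u ≤ R * b v) : |μ| ≤ R := by
  obtain ⟨x, hx⟩ := hμ.exists_hasEigenvector
  have heq := eigen_equation hx
  obtain ⟨w, hw⟩ : ∃ w, x w ≠ 0 := by
    by_contra h
    push_neg at h
    exact hx.2 (funext fun v => h v)
  obtain ⟨v₀, -, hv₀⟩ := Finset.exists_max_image Finset.univ (fun v => |x v| / b v)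
    ⟨w, Finset.mem_univ w⟩
  set θ := |x v₀| / b v₀ with hθ
  have hθpos : 0 < θ := by
    have h1 : 0 < |x w| / b w := div_pos (abs_pos.mpr hw) (hb w)
    exact lt_of_lt_of_le h1 (hv₀ w (Finset.mem_univ w))
  have hxb : ∀ u, |x u| ≤ θ * b u := by
    intro u
    have := hv₀ u (Finset.mem_univ u)
    calc |x u| = |x u| / b u * b u := (div_mul_cancel₀ _ (ne_of_gt (hb u))).symm
    _ ≤ θ * b u := mul_le_mul_of_nonneg_right this (le_of_lt (hb u))
  have hxv₀ : |x v₀| = θ * b v₀ := by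
    rw [hθ, div_mul_cancel₀ _ (ne_of_gt (hb v₀))]
  have key : |μ| * |x v₀| ≤ R * |x v₀| := by
    calc |μ| * |x v₀| = |μ * x v₀| := (abs_mul μ (x v₀)).symm
    _ = |∑ u ∈ G.neighborFinset v₀, x u| := by rw [heq v₀]
    _ ≤ ∑ u ∈ G.neighborFinset v₀, |x u| := Finset.abs_sum_le_sum_abs _ _
    _ ≤ ∑ u ∈ G.neighborFinset v₀, θ * b u := Finset.sum_le_sum fun u _ => hxb u
    _ = θ * ∑ u ∈ G.neighborFinset v₀, b u := by rw [Finset.mul_sum]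
    _ ≤ θ * (R * b v₀) := mul_le_mul_of_nonneg_left (hrow v₀) (le_of_lt hθpos)
    _ = R * |x v₀| := by rw [hxv₀]; ring
  have hxv₀pos : 0 < |x v₀| := by rw [hxv₀]; exact mul_pos hθpos (hb v₀)
  exact le_of_mul_le_mul_right (by linarith [key]) hxv₀pos

lemma eig_eq_rows (hconn : G.Connected) {R : ℝ}
    (hμ : Module.End.HasEigenvalue (Matrix.toLin' (G.adjMatrix ℝ)) R)
    {b : V → ℝ} (hb : ∀ v, 0 < b v)
    (hrow : ∀ v, ∑ u ∈ G.neighborFinset v, b u ≤ R * b v) (hR : 0 < R) :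
    ∀ v, ∑ u ∈ G.neighborFinset v, b u = R * b v := by
  obtain ⟨x, hx⟩ := hμ.exists_hasEigenvector
  have heq := eigen_equation hx
  obtain ⟨w, hw⟩ : ∃ w, x w ≠ 0 := by
    by_contra h
    push_neg at h
    exact hx.2 (funext fun v => h v)
  obtain ⟨v₀, -, hv₀⟩ := Finset.exists_max_image Finset.univ (fun v => |x v| / b v)
    ⟨w, Finset.mem_univ w⟩
  set θ := |x v₀| / b v₀ with hθ
  have hθpos : 0 < θ := by
    have h1 : 0 < |x w| / b w := div_pos (abs_pos.mpr hw) (hb w)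
    exact lt_of_lt_of_le h1 (hv₀ w (Finset.mem_univ w))
  have hxb : ∀ u, |x u| ≤ θ * b u := by
    intro u
    have := hv₀ u (Finset.mem_univ u)
    calc |x u| = |x u| / b u * b u := (div_mul_cancel₀ _ (ne_of_gt (hb u))).symm
    _ ≤ θ * b u := mul_le_mul_of_nonneg_right this (le_of_lt (hb u))
  have key : ∀ v, |x v| = θ * b v →
      (∑ u ∈ G.neighborFinset v, b u = R * b v) ∧
        ∀ u ∈ G.neighborFinset v, |x u| = θ * b u := by
    intro v hv
    have c1 : |R * x v| ≤ ∑ u ∈ G.neighborFinset v, |x u| := by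
      rw [← heq v]; exact Finset.abs_sum_le_sum_abs _ _
    have c2 : ∑ u ∈ G.neighborFinset v, |x u| ≤ ∑ u ∈ G.neighborFinset v, θ * b u :=
      Finset.sum_le_sum fun u _ => hxb u
    have c3 : ∑ u ∈ G.neighborFinset v, θ * b u ≤ θ * (R * b v) := by
      rw [← Finset.mul_sum]
      exact mul_le_mul_of_nonneg_left (hrow v) (le_of_lt hθpos)
    have c4 : |R * x v| = θ * (R * b v) := by
      rw [abs_mul, abs_of_pos hR, hv]; ring
    have e2 : ∑ u ∈ G.neighborFinset v, |x u| = ∑ u ∈ G.neighborFinset v, θ * b u := by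
      linarith
    have e3 : ∑ u ∈ G.neighborFinset v, θ * b u = θ * (R * b v) := by linarith
    constructor
    · have := e3
      rw [← Finset.mul_sum] at this
      exact mul_left_cancel₀ (ne_of_gt hθpos) this
    · intro u hu
      exact (Finset.sum_eq_sum_iff_of_le (fun u _ => hxb u)).mp e2 u hu
  have hstep : ∀ (a v : V) (p : G.Walk a v), |x a| = θ * b a → |x v| = θ * b v := by
    intro a v p
    induction p with
    | nil => exact fun h => h
    | cons hadj q ih =>
      intro ha
      exact ih ((key _ ha).2 _ ((G.mem_neighborFinset _ _).mpr hadj))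
  have hS : ∀ v, |x v| = θ * b v := by
    intro v
    obtain ⟨p⟩ := hconn v₀ v
    exact hstep v₀ v p (by rw [hθ, div_mul_cancel₀ _ (ne_of_gt (hb v₀))])
  intro v
  exact (key v (hS v)).1

lemma eigSet_finite :
    {μ : ℝ | Module.End.HasEigenvalue (Matrix.toLin' (G.adjMatrix ℝ)) μ}.Finite :=
  Module.End.finite_hasEigenvalue (Matrix.toLin' (G.adjMatrix ℝ))

lemma regular_hasEigenvalue [Nonempty V] {d : ℕ} (hreg : G.IsRegularOfDegree d) :
    Module.End.HasEigenvalue (Matrix.toLin' (G.adjMatrix ℝ)) (d : ℝ) := by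
  apply Module.End.hasEigenvalue_of_hasEigenvector (x := fun _ => (1 : ℝ))
  constructor
  · rw [Module.End.mem_eigenspace_iff]
    funext v
    rw [Matrix.toLin'_apply]
    rw [SimpleGraph.adjMatrix_mulVec_apply, Finset.sum_const,
      G.card_neighborFinset_eq_degree, hreg v, Pi.smul_apply, smul_eq_mul, mul_one,
      nsmul_eq_mul, mul_one]
  · intro h
    have := congrFun h (Classical.arbitrary V)
    simp at this

lemma specRad_eq_of_regular [Nonempty V] {d : ℕ} (hreg : G.IsRegularOfDegree d) :
    specRad G = d := by
  have hmem : (d : ℝ) ∈ {μ : ℝ | Module.End.HasEigenvalue (Matrix.toLin' (G.adjMatrix ℝ)) μ} :=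
    regular_hasEigenvalue hreg
  refine le_antisymm (csSup_le ⟨_, hmem⟩ ?_) (le_csSup eigSet_finite.bddAbove hmem)
  intro μ hμ
  refine le_trans (le_abs_self μ) (eig_abs_le hμ (b := fun _ => (1 : ℝ)) (fun _ => one_pos) ?_)
  intro v
  rw [Finset.sum_const, G.card_neighborFinset_eq_degree, hreg v, nsmul_eq_mul, mul_one]
end Aux

/-- Equality in the spectral lower bound for `π_t(G)` holds if and
only if `G` is regular and admits a `K_t`-decomposition. -/
theorem piT_eq_specRad_iff [Fintype V] [DecidableEq V] (G : SimpleGraph V) [DecidableRel G.Adj]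
    (t : ℕ) (ht : 2 ≤ t) (hconn : G.Connected) (hedge : G.edgeSet.Nonempty) :
    (piT G t : ℝ) = specRad G + ((Fintype.card V : ℝ) - t + 1) *
        (⌈(G.minDegree : ℝ) / ((t : ℝ) - 1)⌉ : ℤ) ↔
      (∃ d, G.IsRegularOfDegree d) ∧
        ∃ P : Finset (Finset V), IsCliquePartition G P ∧ ∀ s ∈ P, s.card = t := by
  classical
  obtain ⟨a₀, b₀, hab⟩ : ∃ a b : V, G.Adj a b := by
    obtain ⟨e, he⟩ := hedge
    induction e with
    | _ a b => exact ⟨a, b, he⟩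
  haveI : Nonempty V := ⟨a₀⟩
  set n := Fintype.card V with hn
  set k := t - 1 with hk
  have hk1 : 1 ≤ k := by omega
  have hkt : t = k + 1 := by omega
  have hkR : ((t : ℝ) - 1) = (k : ℝ) := by
    have h1 : (t : ℝ) = (k : ℝ) + 1 := by exact_mod_cast hkt
    linarith
  have hkpos : (0 : ℝ) < (k : ℝ) := by exact_mod_cast hk1
  have hdegpos : ∀ v : V, 1 ≤ G.degree v := by
    intro v
    have hx : ∃ u, G.Adj v u := by
      obtain ⟨p⟩ := hconn v a₀
      cases p with
      | nil => exact ⟨b₀, hab⟩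
      | cons h q => exact ⟨_, h⟩
    obtain ⟨u, hu⟩ := hx
    have hmem : u ∈ G.neighborFinset v := (G.mem_neighborFinset _ _).mpr hu
    have := Finset.card_pos.mpr ⟨u, hmem⟩
    rwa [G.card_neighborFinset_eq_degree] at this
  have hδ1 : 1 ≤ G.minDegree := G.le_minDegree_of_forall_le_degree 1 hdegpos
  rw [hkR]
  set C : V → ℤ := fun v => ⌈(G.degree v : ℝ) / (k : ℝ)⌉ with hCdef
  set c : ℤ := ⌈(G.minDegree : ℝ) / (k : ℝ)⌉ with hcdef
  have hc1 : 1 ≤ c := by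
    have h1 : (0 : ℝ) < (G.minDegree : ℝ) / (k : ℝ) := by
      apply div_pos _ hkpos
      exact_mod_cast hδ1
    have := Int.ceil_pos.mpr h1
    omega
  have hcC : ∀ v, c ≤ C v := by
    intro v
    apply Int.ceil_le_ceil
    gcongr
    exact_mod_cast G.minDegree_le_degree v
  have hC1 : ∀ v, 1 ≤ C v := fun v => le_trans hc1 (hcC v)
  have hdegC : ∀ v, (G.degree v : ℤ) ≤ (k : ℤ) * C v := by
    intro v
    have h1 : (G.degree v : ℝ) / (k : ℝ) ≤ ((C v : ℤ) : ℝ) := Int.le_ceil _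
    have h2 : (G.degree v : ℝ) ≤ ((C v : ℤ) : ℝ) * (k : ℝ) := (div_le_iff₀ hkpos).mp h1
    have h3 : (G.degree v : ℝ) ≤ ((k : ℤ) * C v : ℤ) := by push_cast; linarith
    exact_mod_cast h3
  set Eε : ℤ := ∑ v : V, (C v - c) with hEdef
  have hE0 : 0 ≤ Eε := Finset.sum_nonneg fun v _ => sub_nonneg.mpr (hcC v)
  have hSC : ∑ v : V, C v = (n : ℤ) * c + Eε := by
    rw [hEdef, Finset.sum_sub_distrib, Finset.sum_const, Finset.card_univ]
    push_cast [hn]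
    ring
  set R : ℤ := (k : ℤ) * c + Eε with hRdef
  have hR1 : 1 ≤ R := by
    have hkz : (1 : ℤ) ≤ (k : ℤ) := by exact_mod_cast hk1
    nlinarith [hE0, hc1]
  have hrow : ∀ v, ∑ u ∈ G.neighborFinset v, C u ≤ R * C v := by
    intro v
    have e1 : ∑ u ∈ G.neighborFinset v, C u
        = c * (G.degree v : ℤ) + ∑ u ∈ G.neighborFinset v, (C u - c) := by
      rw [Finset.sum_sub_distrib, Finset.sum_const, G.card_neighborFinset_eq_degree]
      push_cast
      ring
    have e2 : ∑ u ∈ G.neighborFinset v, (C u - c) ≤ Eε :=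
      Finset.sum_le_sum_of_subset_of_nonneg (Finset.subset_univ _)
        (fun u _ _ => sub_nonneg.mpr (hcC u))
    have e3 : c * (G.degree v : ℤ) ≤ c * ((k : ℤ) * C v) :=
      mul_le_mul_of_nonneg_left (hdegC v) (by linarith)
    have e4 : Eε ≤ C v * Eε := le_mul_of_one_le_left hE0 (hC1 v)
    calc ∑ u ∈ G.neighborFinset v, C u
        ≤ c * ((k : ℤ) * C v) + C v * Eε := by rw [e1]; exact add_le_add e3 (le_trans e2 e4)
    _ = R * C v := by rw [hRdef]; ring
  have hrowR : ∀ v, ∑ u ∈ G.neighborFinset v, ((C u : ℤ) : ℝ) ≤ ((R : ℤ) : ℝ) * ((C v : ℤ) : ℝ) := by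
    intro v
    have := hrow v
    have h2 : ((∑ u ∈ G.neighborFinset v, C u : ℤ) : ℝ) ≤ ((R * C v : ℤ) : ℝ) := by
      exact_mod_cast this
    push_cast at h2
    exact h2
  have hbpos : ∀ v, (0 : ℝ) < ((C v : ℤ) : ℝ) := by
    intro v
    have := hC1 v
    exact_mod_cast lt_of_lt_of_le zero_lt_one this
  -- piT facts
  set setS : Set ℕ := {m | ∃ P : Finset (Finset V),
    IsCliquePartition G P ∧ (∀ s ∈ P, s.card ≤ t) ∧ ∑ s ∈ P, s.card = m} with hsetS
  have hpiT_def : piT G t = sInf setS := rfl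
  have hSne : setS.Nonempty := by
    refine ⟨∑ s ∈ G.edgeFinset.image pairFinset, s.card,
      G.edgeFinset.image pairFinset, (edgePartition G).1, ?_, rfl⟩
    intro s hs
    rw [(edgePartition G).2 s hs]
    omega
  have hPmem : piT G t ∈ setS := by rw [hpiT_def]; exact Nat.sInf_mem hSne
  have hPle : ∀ m ∈ setS, piT G t ≤ m := fun m hm => by rw [hpiT_def]; exact Nat.sInf_le hm
  have hLB : ∀ m ∈ setS, (∑ v : V, C v) ≤ (m : ℤ) := by
    rintro m ⟨P, hP, hPt, rfl⟩
    have h1 : ∀ v : V, C v ≤ ((P.filter (fun Q => v ∈ Q)).card : ℤ) := by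
      intro v
      exact ceil_le_r hP hk1 (fun s hs => by rw [← hkt]; exact hPt s hs) v
    calc ∑ v : V, C v ≤ ∑ v : V, ((P.filter (fun Q => v ∈ Q)).card : ℤ) :=
          Finset.sum_le_sum fun v _ => h1 v
    _ = ((∑ s ∈ P, s.card : ℕ) : ℤ) := by
          rw [cliquePartition_sum_card P]
          push_cast
          rfl
  have hpiT_geZ : (∑ v : V, C v) ≤ (piT G t : ℤ) := hLB _ hPmem
  have hnkR : ((n : ℝ) - (t : ℝ) + 1) = (n : ℝ) - (k : ℝ) := by
    have h1 : (t : ℝ) = (k : ℝ) + 1 := by exact_mod_cast hkt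
    linarith
  constructor
  · -- forward direction
    intro h
    rw [hnkR] at h
    set Eig : Set ℝ :=
      {μ : ℝ | Module.End.HasEigenvalue (Matrix.toLin' (G.adjMatrix ℝ)) μ} with hEig
    have hspec_def : specRad G = sSup Eig := rfl
    by_cases hEigNe : Eig.Nonempty
    · have hρmem : specRad G ∈ Eig := by
        rw [hspec_def]; exact hEigNe.csSup_mem eigSet_finite
      have hρle : specRad G ≤ ((R : ℤ) : ℝ) :=
        le_trans (le_abs_self _) (eig_abs_le hρmem hbpos hrowR)
      have hgeR : ((∑ v : V, C v : ℤ) : ℝ) ≤ (piT G t : ℝ) := by exact_mod_cast hpiT_geZ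
      have hSCR : ((∑ v : V, C v : ℤ) : ℝ) = (n : ℝ) * ((c : ℤ) : ℝ) + ((Eε : ℤ) : ℝ) := by
        rw [hSC]; push_cast; ring
      have hRR : ((R : ℤ) : ℝ) = (k : ℝ) * ((c : ℤ) : ℝ) + ((Eε : ℤ) : ℝ) := by
        rw [hRdef]; push_cast; ring
      have hρge : ((R : ℤ) : ℝ) ≤ specRad G := by
        rw [hRR]
        rw [h] at hgeR
        rw [hSCR] at hgeR
        linarith
      have hρR : specRad G = ((R : ℤ) : ℝ) := le_antisymm hρle hρge
      have hpiTeqR : (piT G t : ℝ) = ((∑ v : V, C v : ℤ) : ℝ) := by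
        rw [h, hρR, hSCR, hRR]; ring
      have hpiTeqZ : (piT G t : ℤ) = ∑ v : V, C v := by exact_mod_cast hpiTeqR
      -- rows are tight
      have hEigR : Module.End.HasEigenvalue (Matrix.toLin' (G.adjMatrix ℝ)) ((R : ℤ) : ℝ) := by
        rw [← hρR]; exact hρmem
      have hRpos : (0 : ℝ) < ((R : ℤ) : ℝ) := by exact_mod_cast hR1
      have htight := eig_eq_rows hconn hEigR hbpos hrowR hRpos
      have htZ : ∀ v, ∑ u ∈ G.neighborFinset v, C u = R * C v := by
        intro v
        have h2 : ((∑ u ∈ G.neighborFinset v, C u : ℤ) : ℝ) = ((R * C v : ℤ) : ℝ) := by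
          push_cast
          exact htight v
        exact_mod_cast h2
      -- extract equalities
      have hdeg_eq : ∀ v, (G.degree v : ℤ) = (k : ℤ) * C v := by
        intro v
        have e1 : ∑ u ∈ G.neighborFinset v, C u
            = c * (G.degree v : ℤ) + ∑ u ∈ G.neighborFinset v, (C u - c) := by
          rw [Finset.sum_sub_distrib, Finset.sum_const, G.card_neighborFinset_eq_degree]
          push_cast
          ring
        have e2 : ∑ u ∈ G.neighborFinset v, (C u - c) ≤ Eε :=
          Finset.sum_le_sum_of_subset_of_nonneg (Finset.subset_univ _)
            (fun u _ _ => sub_nonneg.mpr (hcC u))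
        have e3 : c * (G.degree v : ℤ) ≤ c * ((k : ℤ) * C v) :=
          mul_le_mul_of_nonneg_left (hdegC v) (by linarith)
        have e4 : Eε ≤ C v * Eε := le_mul_of_one_le_left hE0 (hC1 v)
        have e5 : c * (G.degree v : ℤ) + ∑ u ∈ G.neighborFinset v, (C u - c)
            = c * ((k : ℤ) * C v) + C v * Eε := by
          rw [← e1, htZ v, hRdef]; ring
        have e6 : c * (G.degree v : ℤ) = c * ((k : ℤ) * C v) := by linarith
        exact mul_left_cancel₀ (by omega : c ≠ 0) e6
      have hEεv : ∀ v, ∑ u ∈ G.neighborFinset v, (C u - c) = C v * Eε := by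
        intro v
        have e1 : ∑ u ∈ G.neighborFinset v, C u
            = c * (G.degree v : ℤ) + ∑ u ∈ G.neighborFinset v, (C u - c) := by
          rw [Finset.sum_sub_distrib, Finset.sum_const, G.card_neighborFinset_eq_degree]
          push_cast
          ring
        have e5 : c * (G.degree v : ℤ) + ∑ u ∈ G.neighborFinset v, (C u - c)
            = c * ((k : ℤ) * C v) + C v * Eε := by
          rw [← e1, htZ v, hRdef]; ring
        have e6 : c * (G.degree v : ℤ) = c * ((k : ℤ) * C v) := by
          rw [hdeg_eq v]
        linarith
      have hEzero : Eε = 0 := by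
        by_contra hne
        have hEpos : 0 < Eε := lt_of_le_of_ne hE0 (Ne.symm hne)
        have hCv1 : ∀ v, C v = 1 := by
          intro v
          have h2 : ∑ u ∈ G.neighborFinset v, (C u - c) ≤ Eε :=
            Finset.sum_le_sum_of_subset_of_nonneg (Finset.subset_univ _)
              (fun u _ _ => sub_nonneg.mpr (hcC u))
          have h3 : C v * Eε ≤ 1 * Eε := by rw [← hEεv v, one_mul]; exact h2
          have h4 : C v ≤ 1 := le_of_mul_le_mul_right h3 hEpos
          exact le_antisymm h4 (hC1 v)
        have hc1' : c = 1 := by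
          have := hcC a₀
          rw [hCv1 a₀] at this
          omega
        have : Eε = 0 := by
          rw [hEdef]
          apply Finset.sum_eq_zero
          intro v _
          rw [hCv1 v, hc1']
          ring
        exact hne this
      have hCvc : ∀ v, C v = c := by
        intro v
        have := (Finset.sum_eq_zero_iff_of_nonneg
          (fun u (_ : u ∈ Finset.univ) => sub_nonneg.mpr (hcC u))).mp hEzero v (Finset.mem_univ v)
        linarith
      have hdreg : ∀ v, (G.degree v : ℤ) = (k : ℤ) * c := by
        intro v
        rw [hdeg_eq v, hCvc v]
      have hreg : G.IsRegularOfDegree (G.degree a₀) := by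
        intro v
        have h1 := hdreg v
        have h2 := hdreg a₀
        exact_mod_cast h1.trans h2.symm
      refine ⟨⟨G.degree a₀, hreg⟩, ?_⟩
      -- build the K_t decomposition from an optimal partition
      obtain ⟨P₀, hP₀, hP₀t, hP₀sum⟩ := hPmem
      set P : Finset (Finset V) := P₀.filter (fun s => 2 ≤ s.card) with hPdef
      have hP : IsCliquePartition G P := by
        constructor
        · intro s hs
          exact hP₀.1 s (Finset.mem_filter.mp hs).1
        · intro u v huv
          obtain ⟨s, hs, hsuniq⟩ := hP₀.2 u v huv
          have hsub : ({u, v} : Finset V) ⊆ s := by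
            intro x hx
            rcases Finset.mem_insert.mp hx with rfl | hx
            · exact hs.2.1
            · rw [Finset.mem_singleton] at hx; subst hx; exact hs.2.2
          have h2s : 2 ≤ s.card := by
            calc 2 = ({u, v} : Finset V).card := (Finset.card_pair (G.ne_of_adj huv)).symm
            _ ≤ s.card := Finset.card_le_card hsub
          refine ⟨s, ⟨Finset.mem_filter.mpr ⟨hs.1, h2s⟩, hs.2.1, hs.2.2⟩, ?_⟩
          rintro s' ⟨hs', h1', h2'⟩
          exact hsuniq s' ⟨(Finset.mem_filter.mp hs').1, h1', h2'⟩
      have hPt : ∀ s ∈ P, s.card ≤ t := fun s hs => hP₀t s (Finset.mem_filter.mp hs).1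
      have hPsum : ∑ s ∈ P, s.card = piT G t := by
        have hle2 : ∑ s ∈ P, s.card ≤ ∑ s ∈ P₀, s.card :=
          Finset.sum_le_sum_of_subset (Finset.filter_subset _ _)
        have hge2 : piT G t ≤ ∑ s ∈ P, s.card := hPle _ ⟨P, hP, hPt, rfl⟩
        omega
      -- r v = C v
      have hrC : ∀ v : V, C v ≤ ((P.filter (fun Q => v ∈ Q)).card : ℤ) := fun v =>
        ceil_le_r hP hk1 (fun s hs => by rw [← hkt]; exact hPt s hs) v
      have hsum_r : ∑ v : V, ((P.filter (fun Q => v ∈ Q)).card : ℤ) = ∑ v : V, C v := by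
        have h1 : ((∑ s ∈ P, s.card : ℕ) : ℤ) = (piT G t : ℤ) := by exact_mod_cast hPsum
        rw [cliquePartition_sum_card P] at h1
        rw [hpiTeqZ] at h1
        push_cast at h1
        exact_mod_cast h1
      have hrCeq : ∀ v : V, ((P.filter (fun Q => v ∈ Q)).card : ℤ) = C v := by
        intro v
        exact ((Finset.sum_eq_sum_iff_of_le (fun v _ => hrC v)).mp hsum_r.symm v
          (Finset.mem_univ v)).symm
      refine ⟨P, hP, ?_⟩
      intro s hs
      have h2s : 2 ≤ s.card := (Finset.mem_filter.mp hs).2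
      obtain ⟨v, hv⟩ : ∃ v, v ∈ s := Finset.card_pos.mp (by omega)
      have hdegv := cliquePartition_degree hP v
      have hkrv : G.degree v = k * (P.filter (fun Q => v ∈ Q)).card := by
        have h1 : (G.degree v : ℤ) = (k : ℤ) * ((P.filter (fun Q => v ∈ Q)).card : ℤ) := by
          rw [hrCeq v]
          exact hdeg_eq v
        exact_mod_cast h1
      have hsum2 : ∑ Q ∈ P.filter (fun Q => v ∈ Q), (Q.card - 1)
          = ∑ _Q ∈ P.filter (fun Q => v ∈ Q), k := by
        rw [← hdegv, hkrv, Finset.sum_const, smul_eq_mul, mul_comm]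
      have hterm : ∀ Q ∈ P.filter (fun Q => v ∈ Q), Q.card - 1 ≤ k := by
        intro Q hQ
        have := hPt Q (Finset.mem_filter.mp hQ).1
        omega
      have hptw := (Finset.sum_eq_sum_iff_of_le hterm).mp hsum2
      have hsmem : s ∈ P.filter (fun Q => v ∈ Q) := Finset.mem_filter.mpr ⟨hs, hv⟩
      have := hptw s hsmem
      omega
    · -- eigenvalue set empty: contradiction
      exfalso
      have hEmpty : Eig = ∅ := Set.not_nonempty_iff_eq_empty.mp hEigNe
      have hspec0 : specRad G = 0 := by
        rw [hspec_def, hEmpty, Real.sSup_empty]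
      rw [hspec0] at h
      have hgeR : ((∑ v : V, C v : ℤ) : ℝ) ≤ (piT G t : ℝ) := by exact_mod_cast hpiT_geZ
      have hSCR : ((∑ v : V, C v : ℤ) : ℝ) = (n : ℝ) * ((c : ℤ) : ℝ) + ((Eε : ℤ) : ℝ) := by
        rw [hSC]; push_cast; ring
      have hcR : (1 : ℝ) ≤ ((c : ℤ) : ℝ) := by exact_mod_cast hc1
      have hkR1 : (1 : ℝ) ≤ (k : ℝ) := by exact_mod_cast hk1
      have hER : (0 : ℝ) ≤ ((Eε : ℤ) : ℝ) := by exact_mod_cast hE0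
      rw [h, hSCR] at hgeR
      nlinarith
  · -- reverse direction
    rintro ⟨⟨d, hreg⟩, P₀, hP₀, hP₀t⟩
    have hd1 : 1 ≤ d := by
      have := hdegpos a₀
      rw [hreg a₀] at this
      exact this
    have hδd : G.minDegree = d := by
      refine le_antisymm ?_ (G.le_minDegree_of_forall_le_degree d fun v => le_of_eq (hreg v).symm)
      have := G.minDegree_le_degree a₀
      rwa [hreg a₀] at this
    have hkr : ∀ v : V, G.degree v = (P₀.filter (fun Q => v ∈ Q)).card * k := by
      intro v
      rw [cliquePartition_degree hP₀ v]
      calc ∑ Q ∈ P₀.filter (fun Q => v ∈ Q), (Q.card - 1)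
          = ∑ _Q ∈ P₀.filter (fun Q => v ∈ Q), k := by
            refine Finset.sum_congr rfl fun Q hQ => ?_
            have hQt := hP₀t Q (Finset.mem_filter.mp hQ).1
            rw [hQt, hkt]
            omega
      _ = (P₀.filter (fun Q => v ∈ Q)).card * k := by
            rw [Finset.sum_const, smul_eq_mul]
    set m : ℕ := (P₀.filter (fun Q => a₀ ∈ Q)).card with hm
    have hdm : d = k * m := by
      have := hkr a₀
      rw [hreg a₀] at this
      rw [this]; ring
    have hr₀ : ∀ v : V, (P₀.filter (fun Q => v ∈ Q)).card = m := by
      intro v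
      have h1 := hkr v
      rw [hreg v, hdm] at h1
      rw [mul_comm ((P₀.filter (fun Q => v ∈ Q)).card) k] at h1
      exact (Nat.eq_of_mul_eq_mul_left hk1 h1).symm
    have hsum₀ : ∑ s ∈ P₀, s.card = n * m := by
      rw [cliquePartition_sum_card P₀]
      rw [Finset.sum_congr rfl fun v _ => hr₀ v, Finset.sum_const, Finset.card_univ, smul_eq_mul]
    have hCm : ∀ v : V, C v = (m : ℤ) := by
      intro v
      rw [hCdef]
      have hq : (G.degree v : ℝ) / (k : ℝ) = ((m : ℕ) : ℝ) := by
        rw [hreg v, hdm]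
        push_cast
        field_simp
      simp only [hq]
      exact_mod_cast Int.ceil_natCast m
    have hcm : c = (m : ℤ) := by
      rw [hcdef]
      have hq : (G.minDegree : ℝ) / (k : ℝ) = ((m : ℕ) : ℝ) := by
        rw [hδd, hdm]
        push_cast
        field_simp
      simp only [hq]
      exact_mod_cast Int.ceil_natCast m
    have hpiT_le : piT G t ≤ n * m :=
      hPle _ ⟨P₀, hP₀, fun s hs => le_of_eq (hP₀t s hs), hsum₀⟩
    have hpiT_ge : n * m ≤ piT G t := by
      have := hpiT_geZ
      have h2 : ∑ v : V, C v = ((n * m : ℕ) : ℤ) := by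
        rw [Finset.sum_congr rfl fun v _ => hCm v, Finset.sum_const, Finset.card_univ]
        push_cast [hn]
        ring
      rw [h2] at this
      exact_mod_cast this
    have hpiT : piT G t = n * m := le_antisymm hpiT_le hpiT_ge
    have hspec : specRad G = (d : ℝ) := specRad_eq_of_regular hreg
    rw [hpiT, hspec, hcm, hnkR]
    have hdmR : (d : ℝ) = (k : ℝ) * (m : ℝ) := by exact_mod_cast hdm
    push_cast
    rw [hdmR]
    ring
end
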